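/- arXiv:2302.01169 — 2 statements merged into one kernel-verified Lean document; each statement's English description precedes it below -/
import Mathlib

section
/- Explicit formula for the order-book generator: for every f ∈ B(L) and every X ∈ L, Lf(X) = Σ_{z=1}^∞ [ Σ_{i=1}^{a(X)−1} λ₊(i,X,z)·(f(X⁺+z·e_i, X⁻) − f(X)) + Σ_{i=a(X)}^{S_X⁻¹(z)−1} λ₊(i,X,z)·(f(X⁺+(z−S_X(i))·e_i, τ^{i+1}(X⁻)) − f(X)) + Σ_{i=S_X⁻¹(z)}^{d} λ₊(i,X,z)·(f(X⁺, τ^{S_X⁻¹(z)+1}(X⁻) + (S_X(S_X⁻¹(z))−z)·e_{S_X⁻¹(z)}) − f(X)) + Σ_{i=b(X)+1}^{d} λ₋(i,X,z)·(f(X⁺, X⁻+z·e_i) − f(X)) + Σ_{i=B_X⁻¹(z)+1}^{b(X)} λ₋(i,X,z)·(f(τ_{i−1}(X⁺), X⁻+(z−B_X(i))·e_i) − f(X)) + Σ_{i=1}^{B_X⁻¹(z)} λ₋(i,X,z)·(f(τ_{B_X⁻¹(z)−1}(X⁺) + (B_X(B_X⁻¹(z))−z)·e_{B_X⁻¹(z)},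 X⁻) − f(X)) + Σ_{i=1}^{b(X)} C₊(i,X,z)·(f(X⁺−z·e_i, X⁻) − f(X)) + Σ_{i=a(X)}^{d} C₋(i,X,z)·(f(X⁺, X⁻−z·e_i) − f(X)) ], where sums over empty index ranges are 0. -/
open scoped BigOperators

namespace OB

/-- The space of order configurations `E = ℕ^d × ℕ^d`: buy side and sell side. -/
abbrev E (d : ℕ) := (Fin d → ℕ) × (Fin d → ℕ)

/-- Price support of a vector: the set of prices `j ∈ {1,…,d}` with a positive queue. -/
def supp {d : ℕ} (Z : Fin d → ℕ) : Finset ℕ :=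
  (Finset.univ.filter fun j : Fin d => 0 < Z j).image fun j : Fin d => (j : ℕ) + 1

/-- `sup supp`, with the convention `sup ∅ = 0`. -/
def supSupp {d : ℕ} (Z : Fin d → ℕ) : ℕ := (supp Z).sup id

/-- `inf supp`, with the convention `inf ∅ = d+1`. -/
def infSupp {d : ℕ} (Z : Fin d → ℕ) : ℕ :=
  if h : (supp Z).Nonempty then (supp Z).min' h else d + 1

/-- bid price `b(X) = sup supp(X⁺)`. -/
def bid {d : ℕ} (X : E d) : ℕ := supSupp X.1

/-- ask price `a(X) = inf supp(X⁻)`. -/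
def ask {d : ℕ} (X : E d) : ℕ := infSupp X.2

/-- Admissible limit order book configurations: `a(X) > b(X)`. -/
def Lset (d : ℕ) : Set (E d) := {X | bid X < ask X}

/-- Entry of a vector at price `i` (prices run from 1 to d; 0 outside this range). -/
def ent {d : ℕ} (z : Fin d → ℕ) (i : ℕ) : ℕ :=
  if h : 1 ≤ i ∧ i ≤ d then z ⟨i - 1, by omega⟩ else 0

/-- Standard basis vector at price `i`. -/
def e {d : ℕ} (i : ℕ) : Fin d → ℕ := fun j => if (j : ℕ) + 1 = i then 1 else 0

/-- `τ_i`: zero out all entries at prices `> i`. -/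
def tauLow {d : ℕ} (i : ℤ) (z : Fin d → ℕ) : Fin d → ℕ :=
  fun j => if ((j : ℕ) + 1 : ℤ) ≤ i then z j else 0

/-- `τ^i`: zero out all entries at prices `< i`. -/
def tauHigh {d : ℕ} (i : ℤ) (z : Fin d → ℕ) : Fin d → ℕ :=
  fun j => if i ≤ ((j : ℕ) + 1 : ℤ) then z j else 0

/-- `B_X(k) = Σ_{i ≥ k} X⁺_i`. -/
def BX {d : ℕ} (X : E d) (k : ℕ) : ℕ := ∑ j : Fin d, if k ≤ (j : ℕ) + 1 then X.1 j else 0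

/-- `S_X(k) = Σ_{i ≤ k} X⁻_i`. -/
def SX {d : ℕ} (X : E d) (k : ℕ) : ℕ := ∑ j : Fin d, if (j : ℕ) + 1 ≤ k then X.2 j else 0

/-- `g_X(k) = S_X(k) − B_X(k)`. -/
def gX {d : ℕ} (X : E d) (k : ℕ) : ℤ := (SX X k : ℤ) - (BX X k : ℤ)

/-- `p_A(X) = inf{k ∈ {1,…,d} : g_X(k) > 0}`, convention `inf ∅ = d+1`. -/
def pA {d : ℕ} (X : E d) : ℕ :=
  if h : ((Finset.Icc 1 d).filter fun k => 0 < gX X k).Nonempty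
  then ((Finset.Icc 1 d).filter fun k => 0 < gX X k).min' h else d + 1

/-- `p_B(X) = sup{k ∈ {1,…,d} : g_X(k) < 0}`, convention `sup ∅ = 0`. -/
def pB {d : ℕ} (X : E d) : ℕ :=
  ((Finset.Icc 1 d).filter fun k => gX X k < 0).sup id

/-- `B_X⁻¹(z) = sup{i ∈ {1,…,d} : B_X(i) ≥ z}`, convention `sup ∅ = 0`. -/
def Binv {d : ℕ} (X : E d) (z : ℕ) : ℕ :=
  ((Finset.Icc 1 d).filter fun i => z ≤ BX X i).sup id

/-- `S_X⁻¹(z) = inf{i ∈ {1,…,d} : S_X(i) ≥ z}`, convention `inf ∅ = d+1`. -/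
def Sinv {d : ℕ} (X : E d) (z : ℕ) : ℕ :=
  if h : ((Finset.Icc 1 d).filter fun i => z ≤ SX X i).Nonempty
  then ((Finset.Icc 1 d).filter fun i => z ≤ SX X i).min' h else d + 1

/-- Buy side after order-matching clearing (Eq. (11) of the paper):
`C(X)⁺ = τ_{p_B}(X⁺)` if `g_X(p_B) ≤ −X⁺_{p_B}`, and
`C(X)⁺ = τ_{p_B−1}(X⁺) − min{0, g_X(p_B)}·e_{p_B}` otherwise. -/
def clearPlus {d : ℕ} (X : E d) : Fin d → ℕ :=
  if gX X (pB X) ≤ -(ent X.1 (pB X) : ℤ) then tauLow (pB X : ℤ) X.1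
  else fun j => tauLow ((pB X : ℤ) - 1) X.1 j + (max 0 (-(gX X (pB X)))).toNat * e (pB X) j

/-- Sell side after order-matching clearing (Eq. (12) of the paper):
`C(X)⁻ = τ^{p_A}(X⁻)` if `g_X(p_A) ≥ X⁻_{p_A}`, and
`C(X)⁻ = τ^{p_A+1}(X⁻) + max{0, g_X(p_A)}·e_{p_A}` otherwise. -/
def clearMinus {d : ℕ} (X : E d) : Fin d → ℕ :=
  if (ent X.2 (pA X) : ℤ) ≤ gX X (pA X) then tauHigh (pA X : ℤ) X.2
  else fun j => tauHigh ((pA X : ℤ) + 1) X.2 j + (max 0 (gX X (pA X))).toNat * e (pA X) j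

/-- The order-matching clearing operator. -/
def clear {d : ℕ} (X : E d) : E d := (clearPlus X, clearMinus X)

/-- Price support of an integer-valued vector. -/
def suppZ {d : ℕ} (W : Fin d → ℤ) : Finset ℕ :=
  (Finset.univ.filter fun j : Fin d => 0 < W j).image fun j : Fin d => (j : ℕ) + 1

/-- `sup supp` of an integer-valued vector, convention `sup ∅ = 0`. -/
def supSuppZ {d : ℕ} (W : Fin d → ℤ) : ℕ := (suppZ W).sup id

/-- `inf supp` of an integer-valued vector, convention `inf ∅ = d+1`. -/
def infSuppZ {d : ℕ} (W : Fin d → ℤ) : ℕ :=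
  if h : (suppZ W).Nonempty then (suppZ W).min' h else d + 1

/-- `D : E → E` is an order-matching clearing operator: it maps into `L`, its fixed
points are exactly `L`, and, with `Z(X) = X − D(X)` (computed in `ℤ^d × ℤ^d`), the
conditions (A1)–(A4) of Definition 2.2 hold. -/
def IsOrderMatchingClearing {d : ℕ} (D : E d → E d) : Prop :=
  (∀ X : E d, D X ∈ Lset d) ∧
  (∀ X : E d, X ∈ Lset d ↔ D X = X) ∧
  (∀ X : E d,
    -- (A1): the executed orders `Z(X) = X − D(X)` have nonnegative entries
    (∀ j, (D X).1 j ≤ X.1 j ∧ (D X).2 j ≤ X.2 j) ∧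
    -- (A2): `|Z(X)⁺| = |Z(X)⁻|`
    (∑ j, ((X.1 j : ℤ) - ((D X).1 j : ℤ))) = (∑ j, ((X.2 j : ℤ) - ((D X).2 j : ℤ))) ∧
    -- (A3): `sup supp(Z(X)⁻) ≤ inf supp(Z(X)⁺)`
    supSuppZ (fun j => (X.2 j : ℤ) - ((D X).2 j : ℤ)) ≤
      infSuppZ (fun j => (X.1 j : ℤ) - ((D X).1 j : ℤ)) ∧
    -- (A4): `sup supp(Z(X)⁻) ≤ inf supp(D(X)⁻)` and `inf supp(Z(X)⁺) ≥ sup supp(D(X)⁺)`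
    supSuppZ (fun j => (X.2 j : ℤ) - ((D X).2 j : ℤ)) ≤ infSupp (D X).2 ∧
    supSupp (D X).1 ≤ infSuppZ (fun j => (X.1 j : ℤ) - ((D X).1 j : ℤ)))

/-- Assumption 3.1 on the order-flow intensities `λ₊, λ₋, C₊, C₋` (nonnegativity;
(i) vanishing for sizes `z ≥ min{B_X(1), S_X(d)}`; (ii) the bound `M/(1+z)^α` with
`M > 0`, `α > 1`; (iii) cancellations only affect existing orders). -/
def IntensityAssumptions {d : ℕ} (lamP lamM canP canM : ℕ → E d → ℕ → ℝ)
    (M α : ℝ) : Prop :=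
  0 < M ∧ 1 < α ∧
  ∀ i ∈ Finset.Icc 1 d, ∀ X : E d, ∀ z : ℕ, 1 ≤ z →
    (0 ≤ lamP i X z ∧ 0 ≤ lamM i X z ∧ 0 ≤ canP i X z ∧ 0 ≤ canM i X z) ∧
    (min (BX X 1) (SX X d) ≤ z →
       lamP i X z = 0 ∧ lamM i X z = 0 ∧ canP i X z = 0 ∧ canM i X z = 0) ∧
    (lamP i X z ≤ M / ((1 : ℝ) + (z : ℝ)) ^ α ∧
     lamM i X z ≤ M / ((1 : ℝ) + (z : ℝ)) ^ α ∧
     canP i X z ≤ M / ((1 : ℝ) + (z : ℝ)) ^ α ∧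
     canM i X z ≤ M / ((1 : ℝ) + (z : ℝ)) ^ α) ∧
    (ent X.1 i < z → canP i X z = 0) ∧
    (ent X.2 i < z → canM i X z = 0)

/-- Pointwise action of the order-flow generator `L_o` (Eq. (18) of the paper):
`L_o f(X) = Σ_{z≥1} Σ_{i=1}^d [λ₊(i,X,z)(f(X⁺+z e_i, X⁻) − f(X)) + …]`. -/
noncomputable def LoFun {d : ℕ} (lamP lamM canP canM : ℕ → E d → ℕ → ℝ)
    (f : E d → ℝ) (X : E d) : ℝ :=
  ∑' z : ℕ, ∑ i ∈ Finset.Icc 1 d,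
    (lamP i X (z + 1) * (f (X.1 + (z + 1) • e i, X.2) - f X) +
     lamM i X (z + 1) * (f (X.1, X.2 + (z + 1) • e i) - f X) +
     canP i X (z + 1) * (f (X.1 - (z + 1) • e i, X.2) - f X) +
     canM i X (z + 1) * (f (X.1, X.2 - (z + 1) • e i) - f X))

/-- The transition kernel `p_o` of the order flow: `p_o(X,Y)` is the total intensity of
order-book events leading from `X` to `Y`. -/
noncomputable def po {d : ℕ} (lamP lamM canP canM : ℕ → E d → ℕ → ℝ)
    (X Y : E d) : ℝ :=
  ∑' z : ℕ, ∑ i ∈ Finset.Icc 1 d,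
    ((if Y = (X.1 + (z + 1) • e i, X.2) then lamP i X (z + 1) else 0) +
     (if Y = (X.1, X.2 + (z + 1) • e i) then lamM i X (z + 1) else 0) +
     (if Y = (X.1 - (z + 1) • e i, X.2) then canP i X (z + 1) else 0) +
     (if Y = (X.1, X.2 - (z + 1) • e i) then canM i X (z + 1) else 0))

/-- The transition kernel of the order-book process:
`p(X,Y) = Σ_{Z ∈ E : C(Z) = Y} p_o(X,Z)`. -/
noncomputable def pker {d : ℕ} (lamP lamM canP canM : ℕ → E d → ℕ → ℝ)
    (X Y : E d) : ℝ :=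
  ∑' Z : E d, if clear Z = Y then po lamP lamM canP canM X Z else 0

/-- Pointwise action of the order-book generator `L` (Eq. (21) of the paper):
`L f(X) = Σ_{Y ∈ L} p(X,Y)(f(Y) − f(X))` (only the values of `f` on `L` are used). -/
noncomputable def Lgen {d : ℕ} (lamP lamM canP canM : ℕ → E d → ℕ → ℝ)
    (f : E d → ℝ) (X : E d) : ℝ :=
  ∑' Y : Lset d, pker lamP lamM canP canM X Y.1 * (f Y.1 - f X)

variable {d : ℕ}

/-! ### supp lemmas -/

lemma mem_supp_iff {Z : Fin d → ℕ} {k : ℕ} :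
    k ∈ supp Z ↔ ∃ j : Fin d, (j : ℕ) + 1 = k ∧ 0 < Z j := by
  simp [supp, eq_comm, and_comm]

lemma le_supSupp {Z : Fin d → ℕ} {j : Fin d} (h : 0 < Z j) : (j : ℕ) + 1 ≤ supSupp Z := by
  have : (j : ℕ) + 1 ∈ supp Z := mem_supp_iff.2 ⟨j, rfl, h⟩
  exact Finset.le_sup (f := id) this

lemma supSupp_le_d {Z : Fin d → ℕ} : supSupp Z ≤ d := by
  apply Finset.sup_le
  intro k hk
  rcases mem_supp_iff.1 hk with ⟨j, hj, -⟩
  simp [id, ← hj]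

lemma eq_zero_of_supSupp_lt {Z : Fin d → ℕ} {j : Fin d} (h : supSupp Z < (j : ℕ) + 1) :
    Z j = 0 := by
  by_contra hne
  exact absurd (le_supSupp (Nat.pos_of_ne_zero hne)) (by omega)

lemma infSupp_le {Z : Fin d → ℕ} {j : Fin d} (h : 0 < Z j) : infSupp Z ≤ (j : ℕ) + 1 := by
  have hm : (j : ℕ) + 1 ∈ supp Z := mem_supp_iff.2 ⟨j, rfl, h⟩
  rw [infSupp, dif_pos ⟨_, hm⟩]
  exact Finset.min'_le _ _ hm

lemma eq_zero_of_lt_infSupp {Z : Fin d → ℕ} {j : Fin d} (h : (j : ℕ) + 1 < infSupp Z) :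
    Z j = 0 := by
  by_contra hne
  exact absurd (infSupp_le (Nat.pos_of_ne_zero hne)) (by omega)

lemma one_le_infSupp {Z : Fin d → ℕ} : 1 ≤ infSupp Z := by
  rw [infSupp]
  split
  · rename_i h
    rcases mem_supp_iff.1 (Finset.min'_mem _ h) with ⟨j, hj, -⟩
    have := Finset.min'_mem (supp Z) h
    rcases mem_supp_iff.1 this with ⟨j', hj', -⟩
    omega
  · omega

lemma infSupp_le_d_succ {Z : Fin d → ℕ} : infSupp Z ≤ d + 1 := by
  rw [infSupp]
  split
  · rename_i h
    rcases mem_supp_iff.1 (Finset.min'_mem _ h) with ⟨j, hj, -⟩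
    omega
  · omega

lemma lt_infSupp {Z : Fin d → ℕ} {m : ℕ} (hm : m ≤ d)
    (h : ∀ j : Fin d, 0 < Z j → m < (j : ℕ) + 1) : m < infSupp Z := by
  rw [infSupp]
  split
  · rename_i hne
    rcases mem_supp_iff.1 (Finset.min'_mem _ hne) with ⟨j, hj, hpos⟩
    have := h j hpos
    omega
  · omega

lemma exists_supSupp {Z : Fin d → ℕ} (h : 1 ≤ supSupp Z) :
    ∃ j : Fin d, (j : ℕ) + 1 = supSupp Z ∧ 0 < Z j := by
  have hne : (supp Z).Nonempty := by
    by_contra hne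
    rw [Finset.not_nonempty_iff_eq_empty] at hne
    simp [supSupp, hne] at h
  obtain ⟨b, hb, hbe⟩ := Finset.exists_mem_eq_sup (supp Z) hne id
  rcases mem_supp_iff.1 hb with ⟨j, hj, hpos⟩
  exact ⟨j, by rw [supSupp, hbe, id, hj], hpos⟩

lemma exists_infSupp {Z : Fin d → ℕ} (h : infSupp Z ≤ d) :
    ∃ j : Fin d, (j : ℕ) + 1 = infSupp Z ∧ 0 < Z j := by
  by_cases hne : (supp Z).Nonempty
  · rcases mem_supp_iff.1 (Finset.min'_mem _ hne) with ⟨j, hj, hpos⟩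
    exact ⟨j, by rw [infSupp, dif_pos hne, hj], hpos⟩
  · rw [infSupp, dif_neg hne] at h; omega

/-! ### BX / SX lemmas -/

variable {X : E d}

lemma SX_mono {k m : ℕ} (h : k ≤ m) : SX X k ≤ SX X m := by
  apply Finset.sum_le_sum
  intro j _
  split <;> split <;> first | rfl | omega | exact Nat.zero_le _

lemma BX_anti {k m : ℕ} (h : k ≤ m) : BX X m ≤ BX X k := by
  apply Finset.sum_le_sum
  intro j _
  split <;> split <;> first | rfl | omega | exact Nat.zero_le _

lemma SX_eq_zero {k : ℕ} (h : k < ask X) : SX X k = 0 := by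
  apply Finset.sum_eq_zero
  intro j _
  split
  · exact eq_zero_of_lt_infSupp (by rename_i hh; unfold ask at h; omega)
  · rfl

lemma BX_eq_zero {k : ℕ} (h : bid X < k) : BX X k = 0 := by
  apply Finset.sum_eq_zero
  intro j _
  split
  · exact eq_zero_of_supSupp_lt (by rename_i hh; unfold bid at h; omega)
  · rfl

lemma le_SX {k : ℕ} {j : Fin d} (h : (j : ℕ) + 1 ≤ k) : X.2 j ≤ SX X k := by
  refine Finset.single_le_sum (f := fun j : Fin d => if (j : ℕ) + 1 ≤ k then X.2 j else 0)
    (fun _ _ => by positivity) (Finset.mem_univ j) |>.trans_eq' ?_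
  simp [h]

lemma le_BX {k : ℕ} {j : Fin d} (h : k ≤ (j : ℕ) + 1) : X.1 j ≤ BX X k := by
  refine Finset.single_le_sum (f := fun j : Fin d => if k ≤ (j : ℕ) + 1 then X.1 j else 0)
    (fun _ _ => by positivity) (Finset.mem_univ j) |>.trans_eq' ?_
  simp [h]

lemma sum_eq_ent {v : Fin d → ℕ} {k : ℕ} (h1 : 1 ≤ k) (h2 : k ≤ d) :
    (∑ j : Fin d, if (j : ℕ) + 1 = k then v j else 0) = v ⟨k - 1, by omega⟩ := by
  rw [Finset.sum_eq_single_of_mem (⟨k - 1, by omega⟩ : Fin d) (Finset.mem_univ _)]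
  · rw [if_pos (show k - 1 + 1 = k by omega)]
  · intro b _ hb
    rw [if_neg]
    intro hc
    exact hb (Fin.ext (show (b : ℕ) = k - 1 by omega))

lemma SX_succ {k : ℕ} (h1 : 1 ≤ k) (h2 : k ≤ d) :
    SX X k = SX X (k - 1) + X.2 ⟨k - 1, by omega⟩ := by
  have key : SX X k = SX X (k - 1) + ∑ j : Fin d, (if (j : ℕ) + 1 = k then X.2 j else 0) := by
    rw [SX, SX, ← Finset.sum_add_distrib]
    apply Finset.sum_congr rfl
    intro j _
    split <;> split <;> split <;> omega
  rw [key, sum_eq_ent h1 h2]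

lemma BX_succ {k : ℕ} (h1 : 1 ≤ k) (h2 : k ≤ d) :
    BX X k = X.1 ⟨k - 1, by omega⟩ + BX X (k + 1) := by
  have key : BX X k = (∑ j : Fin d, if (j : ℕ) + 1 = k then X.1 j else 0) + BX X (k + 1) := by
    rw [BX, BX, ← Finset.sum_add_distrib]
    apply Finset.sum_congr rfl
    intro j _
    split <;> split <;> split <;> omega
  rw [key, sum_eq_ent h1 h2]

lemma SX_zero : SX X 0 = 0 := by
  apply Finset.sum_eq_zero; intro j _; rw [if_neg (by omega)]

lemma BX_top : BX X (d + 1) = 0 := by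
  apply Finset.sum_eq_zero; intro j _; rw [if_neg (by omega)]

lemma SX_top {k : ℕ} (h : d ≤ k) : SX X k = SX X d := by
  apply Finset.sum_congr rfl; intro j _; rw [if_pos (by omega), if_pos (by omega)]

lemma ask_le_of_SX_pos {k : ℕ} (h : 0 < SX X k) : ask X ≤ k := by
  by_contra hc
  rw [SX_eq_zero (by omega)] at h
  omega

lemma le_bid_of_BX_pos {k : ℕ} (h : 0 < BX X k) : k ≤ bid X := by
  by_contra hc
  rw [BX_eq_zero (by omega)] at h
  omega

/-! ### pA/pB tools -/

lemma sup_Icc_one (m : ℕ) : (Finset.Icc 1 m).sup id = m := by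
  apply le_antisymm
  · apply Finset.sup_le; intro k hk; simp only [Finset.mem_Icc] at hk; simpa using hk.2
  · rcases Nat.eq_zero_or_pos m with h | h
    · simp [h]
    · exact Finset.le_sup (f := id) (by simp [Finset.mem_Icc]; omega)

variable {Y : E d}

lemma pB_eq {m : ℕ} (hm : m ≤ d) (h1 : ∀ k, 1 ≤ k → k ≤ m → gX Y k < 0)
    (h2 : ∀ k, m < k → k ≤ d → 0 ≤ gX Y k) : pB Y = m := by
  have : ((Finset.Icc 1 d).filter fun k => gX Y k < 0) = Finset.Icc 1 m := by
    apply Finset.ext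
    intro k
    simp only [Finset.mem_filter, Finset.mem_Icc]
    constructor
    · rintro ⟨⟨hk1, hkd⟩, hneg⟩
      refine ⟨hk1, ?_⟩
      by_contra hc
      exact absurd (h2 k (by omega) hkd) (by omega)
    · rintro ⟨hk1, hkm⟩
      exact ⟨⟨hk1, by omega⟩, h1 k hk1 hkm⟩
  rw [pB, this, sup_Icc_one]

lemma pA_eq {m : ℕ} (h1m : 1 ≤ m) (hm : m ≤ d) (h1 : ∀ k, 1 ≤ k → k < m → gX Y k ≤ 0)
    (h2 : 0 < gX Y m) : pA Y = m := by
  have hmem : m ∈ (Finset.Icc 1 d).filter fun k => 0 < gX Y k := by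
    simp [Finset.mem_Icc]; exact ⟨⟨h1m, hm⟩, h2⟩
  rw [pA, dif_pos ⟨m, hmem⟩]
  apply le_antisymm
  · exact Finset.min'_le _ _ hmem
  · apply Finset.le_min'
    intro k hk
    simp only [Finset.mem_filter, Finset.mem_Icc] at hk
    by_contra hc
    exact absurd (h1 k hk.1.1 (by omega)) (by omega)

lemma pA_eq_top (h : ∀ k, 1 ≤ k → k ≤ d → gX Y k ≤ 0) : pA Y = d + 1 := by
  rw [pA, dif_neg]
  rw [Finset.filter_nonempty_iff]
  push_neg
  intro k hk
  simp only [Finset.mem_Icc] at hk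
  exact h k hk.1 hk.2

/-- Specification of `pA` when some price has positive imbalance. -/
lemma pA_spec {k₀ : ℕ} (hk₀ : k₀ ∈ Finset.Icc 1 d) (hpos : 0 < gX Y k₀) :
    (1 ≤ pA Y ∧ pA Y ≤ d ∧ 0 < gX Y (pA Y)) ∧
      ∀ k, 1 ≤ k → k ≤ d → 0 < gX Y k → pA Y ≤ k := by
  have hne : ((Finset.Icc 1 d).filter fun k => 0 < gX Y k).Nonempty :=
    ⟨k₀, Finset.mem_filter.2 ⟨hk₀, hpos⟩⟩
  rw [pA, dif_pos hne]
  have hmem := Finset.min'_mem _ hne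
  simp only [Finset.mem_filter, Finset.mem_Icc] at hmem
  refine ⟨⟨hmem.1.1, hmem.1.2, hmem.2⟩, ?_⟩
  intro k hk1 hkd hk
  exact Finset.min'_le _ _ (Finset.mem_filter.2 ⟨Finset.mem_Icc.2 ⟨hk1, hkd⟩, hk⟩)

/-- Specification of `pB` when some price has negative imbalance. -/
lemma pB_spec {k₀ : ℕ} (hk₀ : k₀ ∈ Finset.Icc 1 d) (hneg : gX Y k₀ < 0) :
    (1 ≤ pB Y ∧ pB Y ≤ d ∧ gX Y (pB Y) < 0) ∧
      ∀ k, 1 ≤ k → k ≤ d → gX Y k < 0 → k ≤ pB Y := by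
  have hne : ((Finset.Icc 1 d).filter fun k => gX Y k < 0).Nonempty :=
    ⟨k₀, Finset.mem_filter.2 ⟨hk₀, hneg⟩⟩
  obtain ⟨b, hb, hbe⟩ := Finset.exists_mem_eq_sup _ hne id
  rw [pB, hbe]
  simp only [Finset.mem_filter, Finset.mem_Icc] at hb
  refine ⟨⟨hb.1.1, hb.1.2, hb.2⟩, ?_⟩
  intro k hk1 hkd hk
  rw [← hbe]
  exact Finset.le_sup (f := id) (Finset.mem_filter.2 ⟨Finset.mem_Icc.2 ⟨hk1, hkd⟩, hk⟩)

/-! ### ent and e lemmas -/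

lemma ent_eq {v : Fin d → ℕ} {i : ℕ} (h1 : 1 ≤ i) (h2 : i ≤ d) :
    ent v i = v ⟨i - 1, by omega⟩ := dif_pos ⟨h1, h2⟩

lemma ent_add {u v : Fin d → ℕ} {i : ℕ} : ent (u + v) i = ent u i + ent v i := by
  unfold ent
  split <;> simp

lemma e_self {i : ℕ} (h1 : 1 ≤ i) (h2 : i ≤ d) : e (d := d) i ⟨i - 1, by omega⟩ = 1 := by
  rw [e, if_pos (show i - 1 + 1 = i by omega)]

lemma e_ne {i : ℕ} {j : Fin d} (h : (j : ℕ) + 1 ≠ i) : e (d := d) i j = 0 := by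
  rw [e, if_neg h]

lemma ent_smul_e {i k z : ℕ} (h1 : 1 ≤ i) (h2 : i ≤ d) :
    ent (z • e (d := d) i) k = if k = i then z else 0 := by
  by_cases hk : 1 ≤ k ∧ k ≤ d
  · rw [ent_eq hk.1 hk.2]
    by_cases he : k = i
    · subst he; rw [if_pos rfl, Pi.smul_apply, e_self hk.1 hk.2]; simp
    · rw [if_neg he, Pi.smul_apply, e_ne (by show k - 1 + 1 ≠ i; omega)]; simp
  · rw [ent, dif_neg hk, if_neg (by omega)]

lemma ent_zero_of_gt_bid {i : ℕ} (h : bid X < i) : ent X.1 i = 0 := by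
  by_cases hk : 1 ≤ i ∧ i ≤ d
  · rw [ent_eq hk.1 hk.2]
    apply eq_zero_of_supSupp_lt
    show bid X < i - 1 + 1
    omega
  · rw [ent, dif_neg hk]

lemma ent_zero_of_lt_ask {i : ℕ} (h : i < ask X) : ent X.2 i = 0 := by
  by_cases hk : 1 ≤ i ∧ i ≤ d
  · rw [ent_eq hk.1 hk.2]
    apply eq_zero_of_lt_infSupp
    show i - 1 + 1 < ask X
    omega
  · rw [ent, dif_neg hk]

/-! ### BX/SX of perturbed states -/

lemma sum_smul_e {i z : ℕ} (h1 : 1 ≤ i) (h2 : i ≤ d) (p : ℕ → Prop) [DecidablePred p] :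
    (∑ j : Fin d, if p ((j : ℕ) + 1) then (z • e (d := d) i) j else 0) =
      if p i then z else 0 := by
  have : ∀ j : Fin d, (if p ((j : ℕ) + 1) then (z • e (d := d) i) j else 0) =
      (if (j : ℕ) + 1 = i then (if p ((j : ℕ) + 1) then z else 0) else 0) := by
    intro j
    by_cases he : (j : ℕ) + 1 = i
    · rw [if_pos he, Pi.smul_apply, e, if_pos he]
      split <;> simp
    · rw [if_neg he, Pi.smul_apply, e, if_neg he]
      split <;> simp
  rw [Finset.sum_congr rfl (fun j _ => this j),
    sum_eq_ent (v := fun j => if p ((j : ℕ) + 1) then z else 0) h1 h2]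
  have hc : i - 1 + 1 = i := by omega
  simp only [hc]

lemma BX_addP {i z k : ℕ} (h1 : 1 ≤ i) (h2 : i ≤ d) :
    BX ((X.1 + z • e i, X.2) : E d) k = BX X k + if k ≤ i then z else 0 := by
  rw [BX, BX]
  have : ∀ j : Fin d, (if k ≤ (j : ℕ) + 1 then (X.1 + z • e i : Fin d → ℕ) j else 0) =
      (if k ≤ (j : ℕ) + 1 then X.1 j else 0) +
        (if k ≤ (j : ℕ) + 1 then (z • e (d := d) i) j else 0) := by
    intro j; split <;> simp
  rw [Finset.sum_congr rfl (fun j _ => this j), Finset.sum_add_distrib,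
    sum_smul_e h1 h2 (fun m => k ≤ m)]

lemma SX_addM {i z k : ℕ} (h1 : 1 ≤ i) (h2 : i ≤ d) :
    SX ((X.1, X.2 + z • e i) : E d) k = SX X k + if i ≤ k then z else 0 := by
  rw [SX, SX]
  have : ∀ j : Fin d, (if (j : ℕ) + 1 ≤ k then (X.2 + z • e i : Fin d → ℕ) j else 0) =
      (if (j : ℕ) + 1 ≤ k then X.2 j else 0) +
        (if (j : ℕ) + 1 ≤ k then (z • e (d := d) i) j else 0) := by
    intro j; split <;> simp
  rw [Finset.sum_congr rfl (fun j _ => this j), Finset.sum_add_distrib,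
    sum_smul_e h1 h2 (fun m => m ≤ k)]

lemma SX_addP {i z k : ℕ} : SX ((X.1 + z • e i, X.2) : E d) k = SX X k := rfl

lemma BX_addM {i z k : ℕ} : BX ((X.1, X.2 + z • e i) : E d) k = BX X k := rfl


lemma ent_le_BX {k : ℕ} : ent X.1 k ≤ BX X k := by
  by_cases hk : 1 ≤ k ∧ k ≤ d
  · rw [ent_eq hk.1 hk.2]; exact le_BX (by show k ≤ k - 1 + 1; omega)
  · rw [ent, dif_neg hk]; exact Nat.zero_le _

lemma ent_le_SX {k : ℕ} : ent X.2 k ≤ SX X k := by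
  by_cases hk : 1 ≤ k ∧ k ≤ d
  · rw [ent_eq hk.1 hk.2]; exact le_SX (by show k - 1 + 1 ≤ k; omega)
  · rw [ent, dif_neg hk]; exact Nat.zero_le _

/-- An admissible configuration is a fixed point of the clearing operator. -/
lemma clear_fix (hX : X ∈ Lset d) : clear X = X := by
  have hba : bid X < ask X := hX
  have hbd : bid X ≤ d := supSupp_le_d
  have ha1 : 1 ≤ ask X := one_le_infSupp
  have had : ask X ≤ d + 1 := infSupp_le_d_succ
  have hpB : pB X = bid X := by
    apply pB_eq hbd
    · intro k hk1 hk2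
      have hS : SX X k = 0 := SX_eq_zero (by omega)
      obtain ⟨j, hj, hpos⟩ := exists_supSupp (Z := X.1) (show 1 ≤ supSupp X.1 from le_trans hk1 hk2)
      have hk2' : k ≤ supSupp X.1 := hk2
      have hB : 0 < BX X k := lt_of_lt_of_le hpos (le_BX (by omega))
      rw [gX, hS]
      omega
    · intro k hk1 hk2
      have hB : BX X k = 0 := BX_eq_zero (by omega)
      rw [gX, hB]
      omega
  have hcp : clearPlus X = X.1 := by
    rw [clearPlus, if_pos, hpB]
    · funext j
      rw [tauLow]
      split
      · rfl
      · rename_i hc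
        exact (eq_zero_of_supSupp_lt (show supSupp X.1 < (j : ℕ) + 1 by
          unfold bid at hc; omega)).symm
    · rw [hpB]
      have h1 : ent X.1 (bid X) ≤ BX X (bid X) := ent_le_BX
      have h2 : SX X (bid X) = 0 := SX_eq_zero (by omega)
      rw [gX, h2]
      omega
  have hpA : pA X = ask X := by
    rcases Nat.lt_or_ge d (ask X) with h | h
    · rw [pA_eq_top]
      · omega
      · intro k hk1 hk2
        have hS : SX X k = 0 := SX_eq_zero (by omega)
        rw [gX, hS]
        omega
    · apply pA_eq ha1 h
      · intro k hk1 hk2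
        have hS : SX X k = 0 := SX_eq_zero (by omega)
        rw [gX, hS]
        omega
      · obtain ⟨j, hj, hpos⟩ := exists_infSupp (Z := X.2) h
        have hS : 0 < SX X (ask X) := lt_of_lt_of_le hpos (le_SX (by unfold ask; omega))
        have hB : BX X (ask X) = 0 := BX_eq_zero (by omega)
        rw [gX, hB]
        omega
  have hcm : clearMinus X = X.2 := by
    rw [clearMinus, if_pos, hpA]
    · funext j
      rw [tauHigh]
      split
      · rfl
      · rename_i hc
        exact (eq_zero_of_lt_infSupp (show (j : ℕ) + 1 < infSupp X.2 by
          unfold ask at hc; omega)).symm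
    · rw [hpA]
      have h1 : ent X.2 (ask X) ≤ SX X (ask X) := ent_le_SX
      have h2 : BX X (ask X) = 0 := BX_eq_zero (by omega)
      rw [gX, h2]
      omega
  rw [clear, hcp, hcm]

/-! ### membership lemmas for non-marketable events -/

lemma mem_Lset_addP {i z : ℕ} (hX : X ∈ Lset d) (hi : i < ask X) :
    ((X.1 + z • e i, X.2) : E d) ∈ Lset d := by
  have hba : bid X < ask X := hX
  show bid _ < ask _
  have hask : ask ((X.1 + z • e i, X.2) : E d) = ask X := rfl
  rw [hask, bid, supSupp]
  rw [Finset.sup_lt_iff (show (⊥ : ℕ) < ask X from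
    lt_of_lt_of_le (show (⊥ : ℕ) < 1 by simp) (one_le_infSupp (Z := X.2)))]
  intro b hb
  rcases mem_supp_iff.1 hb with ⟨j, hj, hpos⟩
  simp only [id, ← hj]
  have : X.1 j + z * e i j ≠ 0 := by
    have h' : 0 < X.1 j + z * e i j := hpos
    omega
  rcases Nat.eq_zero_or_pos (X.1 j) with h0 | h0
  · have hei : e (d := d) i j ≠ 0 := by
      intro hc
      rw [hc] at this
      omega
    have : (j : ℕ) + 1 = i := by
      by_contra hc
      exact hei (e_ne hc)
    omega
  · have := le_supSupp h0
    unfold bid at hba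
    omega

lemma mem_Lset_addM {i z : ℕ} (hX : X ∈ Lset d) (hib : bid X < i) (hid : i ≤ d) :
    ((X.1, X.2 + z • e i) : E d) ∈ Lset d := by
  have hba : bid X < ask X := hX
  show bid _ < ask _
  have hbid : bid ((X.1, X.2 + z • e i) : E d) = bid X := rfl
  rw [hbid, ask]
  apply lt_infSupp (show bid X ≤ d from supSupp_le_d)
  intro j hpos
  have hval : 0 < X.2 j + z * e i j := hpos
  clear hpos
  rename' hval => hpos
  rcases Nat.eq_zero_or_pos (X.2 j) with h0 | h0
  · have hei : e (d := d) i j ≠ 0 := by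
      intro hc
      rw [hc] at hpos
      omega
    have : (j : ℕ) + 1 = i := by
      by_contra hc
      exact hei (e_ne hc)
    omega
  · have := infSupp_le h0
    unfold ask at hba
    omega

lemma mem_Lset_subP {v : Fin d → ℕ} (hX : X ∈ Lset d) (hv : ∀ j, v j ≤ X.1 j) :
    ((v, X.2) : E d) ∈ Lset d := by
  have hba : bid X < ask X := hX
  show bid _ < ask _
  have hask : ask ((v, X.2) : E d) = ask X := rfl
  rw [hask, bid, supSupp]
  rw [Finset.sup_lt_iff (show (⊥ : ℕ) < ask X from
    lt_of_lt_of_le (show (⊥ : ℕ) < 1 by simp) (one_le_infSupp (Z := X.2)))]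
  intro b hb
  rcases mem_supp_iff.1 hb with ⟨j, hj, hpos⟩
  simp only [id, ← hj]
  have h0 : 0 < X.1 j := lt_of_lt_of_le hpos (hv j)
  have := le_supSupp h0
  unfold bid at hba
  omega

lemma mem_Lset_subM {v : Fin d → ℕ} (hX : X ∈ Lset d) (hv : ∀ j, v j ≤ X.2 j) :
    ((X.1, v) : E d) ∈ Lset d := by
  have hba : bid X < ask X := hX
  show bid _ < ask _
  have hbid : bid ((X.1, v) : E d) = bid X := rfl
  rw [hbid, ask]
  apply lt_infSupp (show bid X ≤ d from supSupp_le_d)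
  intro j hpos
  have h0 : 0 < X.2 j := lt_of_lt_of_le hpos (hv j)
  have := infSupp_le h0
  unfold ask at hba
  omega


/-! ### imbalance of perturbed states -/

lemma gX_addP {i z k : ℕ} (h1 : 1 ≤ i) (h2 : i ≤ d) :
    gX ((X.1 + z • e i, X.2) : E d) k =
      (SX X k : ℤ) - BX X k - if k ≤ i then (z : ℤ) else 0 := by
  rw [gX, SX_addP, BX_addP h1 h2]
  split <;> push_cast <;> ring

lemma gX_addM {i z k : ℕ} (h1 : 1 ≤ i) (h2 : i ≤ d) :
    gX ((X.1, X.2 + z • e i) : E d) k =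
      (SX X k : ℤ) + (if i ≤ k then (z : ℤ) else 0) - BX X k := by
  rw [gX, BX_addM, SX_addM h1 h2]
  split <;> push_cast <;> ring

/-! ### Sinv / Binv specifications -/

lemma Sinv_spec {z : ℕ} (hz1 : 1 ≤ z) (hzS : z ≤ SX X d) :
    1 ≤ Sinv X z ∧ Sinv X z ≤ d ∧ z ≤ SX X (Sinv X z) ∧
      ∀ k, k < Sinv X z → SX X k < z := by
  have hd : 1 ≤ d := by
    by_contra hc
    have : SX X d ≤ SX X 0 := SX_mono (by omega)
    rw [SX_zero] at this
    omega
  have hmem : d ∈ (Finset.Icc 1 d).filter fun i => z ≤ SX X i := by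
    simp [Finset.mem_Icc]
    exact ⟨hd, hzS⟩
  have hne : ((Finset.Icc 1 d).filter fun i => z ≤ SX X i).Nonempty := ⟨d, hmem⟩
  rw [Sinv, dif_pos hne]
  have hm := Finset.min'_mem _ hne
  simp only [Finset.mem_filter, Finset.mem_Icc] at hm
  refine ⟨hm.1.1, hm.1.2, hm.2, ?_⟩
  intro k hk
  by_contra hc
  rcases Nat.eq_zero_or_pos k with h0 | h0
  · rw [h0, SX_zero] at hc; omega
  · have hkd : k ≤ d := by omega
    have hmem2 : k ∈ (Finset.Icc 1 d).filter fun i => z ≤ SX X i :=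
      Finset.mem_filter.2 ⟨Finset.mem_Icc.2 ⟨h0, hkd⟩, show z ≤ SX X k by omega⟩
    have h5 : ((Finset.Icc 1 d).filter fun i => z ≤ SX X i).min' hne ≤ k :=
      Finset.min'_le _ k hmem2
    omega

lemma ask_le_Sinv {z : ℕ} (hz1 : 1 ≤ z) : ask X ≤ Sinv X z := by
  rw [Sinv]
  split
  · rename_i hne
    have hm := Finset.min'_mem _ hne
    simp only [Finset.mem_filter, Finset.mem_Icc] at hm
    exact ask_le_of_SX_pos (by omega)
  · have := infSupp_le_d_succ (Z := X.2)
    unfold ask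
    omega

lemma Sinv_le_succ {z : ℕ} : Sinv X z ≤ d + 1 := by
  rw [Sinv]
  split
  · rename_i hne
    have hm := Finset.min'_mem _ hne
    simp only [Finset.mem_filter, Finset.mem_Icc] at hm
    omega
  · omega

lemma SX_lt_of_lt_Sinv {i z : ℕ} (hz1 : 1 ≤ z) (h : i < Sinv X z) (hi2 : i ≤ d) :
    SX X i < z := by
  rcases Nat.eq_zero_or_pos i with h0 | h0
  · rw [h0, SX_zero]; omega
  by_contra hc
  rw [Sinv] at h
  split at h
  · rename_i hne
    have hmem2 : i ∈ (Finset.Icc 1 d).filter fun i => z ≤ SX X i :=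
      Finset.mem_filter.2 ⟨Finset.mem_Icc.2 ⟨h0, hi2⟩, show z ≤ SX X i by omega⟩
    have h5 : ((Finset.Icc 1 d).filter fun i => z ≤ SX X i).min' hne ≤ i :=
      Finset.min'_le _ i hmem2
    omega
  · rename_i hne
    rw [Finset.filter_nonempty_iff] at hne
    push_neg at hne
    have := hne i (Finset.mem_Icc.2 ⟨h0, hi2⟩)
    omega

lemma Binv_spec {z : ℕ} (hz1 : 1 ≤ z) (hzB : z ≤ BX X 1) :
    1 ≤ Binv X z ∧ Binv X z ≤ d ∧ z ≤ BX X (Binv X z) ∧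
      ∀ k, Binv X z < k → BX X k < z := by
  have hd : 1 ≤ d := by
    by_contra hc
    have : BX X 1 ≤ BX X 1 := le_rfl
    have h2 : BX X 1 = 0 := by
      have h3 : BX X (d + 1) = 0 := BX_top
      have h4 : BX X (d + 1) ≥ BX X 1 ∨ BX X 1 ≤ BX X (d+1) := Or.inr (BX_anti (by omega))
      have := BX_anti (X := X) (show 1 ≤ d + 1 by omega)
      omega
    omega
  have hmem : 1 ∈ (Finset.Icc 1 d).filter fun i => z ≤ BX X i := by
    simp [Finset.mem_Icc]
    exact ⟨hd, hzB⟩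
  have hne : ((Finset.Icc 1 d).filter fun i => z ≤ BX X i).Nonempty := ⟨1, hmem⟩
  obtain ⟨b, hb, hbe⟩ := Finset.exists_mem_eq_sup _ hne id
  simp only [id_eq] at hbe
  rw [Binv, hbe]
  simp only [Finset.mem_filter, Finset.mem_Icc] at hb
  refine ⟨hb.1.1, hb.1.2, hb.2, ?_⟩
  intro k hk
  by_contra hc
  rcases Nat.lt_or_ge d k with h0 | h0
  · have h1 : BX X k ≤ BX X (d + 1) := BX_anti (by omega)
    rw [BX_top] at h1
    omega
  · have h7 : k ≤ b := by
      conv_rhs => rw [← hbe]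
      exact Finset.le_sup (f := id)
        (Finset.mem_filter.2 ⟨Finset.mem_Icc.2 ⟨by omega, h0⟩,
          show z ≤ BX X k by omega⟩)
    omega

lemma Binv_le_bid {z : ℕ} (hz1 : 1 ≤ z) : Binv X z ≤ bid X := by
  apply Finset.sup_le
  intro k hk
  have h1 : z ≤ BX X k := (Finset.mem_filter.1 hk).2
  exact le_bid_of_BX_pos (k := k) (by omega)

lemma BX_lt_of_Binv_lt {i z : ℕ} (hz1 : 1 ≤ z) (hi : Binv X z < i) : BX X i < z := by
  by_contra hc
  rcases Nat.lt_or_ge d i with h0 | h0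
  · have h1 : BX X i ≤ BX X (d + 1) := BX_anti (by omega)
    rw [BX_top] at h1
    omega
  · have h2 : 0 < BX X i := by omega
    have h3 : 1 ≤ i := by
      have h4 := le_bid_of_BX_pos h2
      have h5 := supSupp_le_d (Z := X.1)
      unfold bid at h4
      omega
    have h6 : i ≤ Binv X z := Finset.le_sup (f := id)
      (Finset.mem_filter.2 ⟨Finset.mem_Icc.2 ⟨h3, h0⟩, show z ≤ BX X i by omega⟩)
    omega

/-! ### clearing of a partially marketable buy order -/

lemma clear_buy_partial {i z : ℕ} (hX : X ∈ Lset d) (hi1 : ask X ≤ i) (hi2 : i ≤ d)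
    (hz : SX X i < z) :
    clear ((X.1 + z • e i, X.2) : E d) =
      (X.1 + (z - SX X i) • e i, tauHigh ((i : ℤ) + 1) X.2) := by
  have hba : bid X < ask X := hX
  have ha1 : 1 ≤ ask X := one_le_infSupp
  have hi0 : 1 ≤ i := le_trans ha1 hi1
  obtain ⟨ja, hja, hjapos⟩ := exists_infSupp (Z := X.2) (le_trans hi1 hi2)
  have hSask : 0 < SX X (ask X) :=
    lt_of_lt_of_le hjapos (le_SX (show (ja : ℕ) + 1 ≤ ask X from le_of_eq hja))
  have hSi : 0 < SX X i := lt_of_lt_of_le hSask (SX_mono hi1)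
  set Z : E d := (X.1 + z • e i, X.2) with hZdef
  have hg : ∀ k, gX Z k = (SX X k : ℤ) - BX X k - if k ≤ i then (z : ℤ) else 0 :=
    fun k => gX_addP hi0 hi2
  have hpB : pB Z = i := by
    apply pB_eq hi2
    · intro k hk1 hk2
      have h1 : SX X k ≤ SX X i := SX_mono hk2
      rw [hg k, if_pos hk2]
      omega
    · intro k hk1 hk2
      have hB : BX X k = 0 := BX_eq_zero (by omega)
      rw [hg k, if_neg (by omega), hB]
      omega
  have hentZ1 : ent Z.1 i = z := by
    have h' : ent Z.1 i = ent X.1 i + ent (z • e i) i := ent_add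
    rw [h', ent_smul_e hi0 hi2, if_pos rfl, ent_zero_of_gt_bid (by omega)]
    omega
  have hgi : gX Z i = (SX X i : ℤ) - z := by
    rw [hg i, if_pos le_rfl, BX_eq_zero (by omega)]
    push_cast
    ring
  have hcp : clearPlus Z = X.1 + (z - SX X i) • e i := by
    rw [clearPlus, hpB, if_neg (by rw [hgi, hentZ1]; omega)]
    funext j
    have htoNat : (max 0 (-gX Z i)).toNat = z - SX X i := by
      rw [hgi, max_eq_right (by omega)]
      omega
    rw [htoNat]
    show tauLow ((i : ℤ) - 1) Z.1 j + (z - SX X i) * e i j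
      = X.1 j + (z - SX X i) * e i j
    congr 1
    rw [tauLow]
    by_cases hji : ((j : ℕ) + 1 : ℤ) ≤ (i : ℤ) - 1
    · rw [if_pos hji]
      show X.1 j + z * e i j = X.1 j
      rw [e_ne (by omega)]
      ring
    · rw [if_neg hji]
      refine (eq_zero_of_supSupp_lt (show supSupp X.1 < (j : ℕ) + 1 from ?_)).symm
      have h1 : supSupp X.1 < ask X := hba
      omega
  have hcm : clearMinus Z = tauHigh ((i : ℤ) + 1) X.2 := by
    have hga : gX Z (i + 1) = (SX X (i + 1) : ℤ) := by
      rw [hg (i + 1), if_neg (by omega), BX_eq_zero (by omega)]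
      ring
    have hpA : pA Z = i + 1 := by
      rcases Nat.lt_or_ge i d with h | h
      · apply pA_eq (by omega) (by omega)
        · intro k hk1 hk2
          have h1 : SX X k ≤ SX X i := SX_mono (by omega)
          rw [hg k, if_pos (by omega)]
          omega
        · rw [hga]
          have : 0 < SX X (i + 1) := lt_of_lt_of_le hSi (SX_mono (by omega))
          omega
      · have hid : i = d := by omega
        have htop : pA Z = d + 1 := pA_eq_top (by
          intro k hk1 hk2
          have h1 : SX X k ≤ SX X i := SX_mono (by omega)
          rw [hg k, if_pos (by omega)]
          omega)
        omega
    rw [clearMinus, hpA, if_pos]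
    · show tauHigh (((i + 1 : ℕ) : ℤ)) X.2 = tauHigh ((i : ℤ) + 1) X.2
      norm_cast
    · show (ent X.2 (i + 1) : ℤ) ≤ gX Z (i + 1)
      rw [hga]
      exact_mod_cast ent_le_SX
  rw [clear, hcp, hcm]

/-! ### clearing of a fully marketable buy order -/

lemma clear_buy_full {i z : ℕ} (hX : X ∈ Lset d) (hz1 : 1 ≤ z) (hzS : z < SX X d)
    (hpi : Sinv X z ≤ i) (hi2 : i ≤ d) :
    clear ((X.1 + z • e i, X.2) : E d) =
      (X.1, tauHigh ((Sinv X z : ℤ) + 1) X.2 + (SX X (Sinv X z) - z) • e (Sinv X z)) := by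
  have hba : bid X < ask X := hX
  obtain ⟨hp1, hpd, hpS, hpmin⟩ := Sinv_spec hz1 (le_of_lt hzS)
  set p := Sinv X z with hpdef
  have hap : ask X ≤ p := ask_le_Sinv hz1
  have hi0 : 1 ≤ i := le_trans hp1 hpi
  set Z : E d := (X.1 + z • e i, X.2) with hZdef
  have hg : ∀ k, gX Z k = (SX X k : ℤ) - BX X k - if k ≤ i then (z : ℤ) else 0 :=
    fun k => gX_addP hi0 hi2
  have hpB : pB Z = p - 1 := by
    apply pB_eq (by omega)
    · intro k hk1 hk2
      have h1 : SX X k < z := hpmin k (by omega)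
      rw [hg k, if_pos (by omega)]
      omega
    · intro k hk1 hk2
      have hB : BX X k = 0 := BX_eq_zero (by omega)
      have h1 : SX X p ≤ SX X k := SX_mono (by omega)
      rw [hg k, hB]
      split <;> omega
  have hcp : clearPlus Z = X.1 := by
    rw [clearPlus, hpB, if_pos]
    · funext j
      rw [tauLow]
      by_cases hji : ((j : ℕ) + 1 : ℤ) ≤ ((p - 1 : ℕ) : ℤ)
      · rw [if_pos hji]
        show X.1 j + z * e i j = X.1 j
        rw [e_ne (by omega)]
        ring
      · rw [if_neg hji]
        refine (eq_zero_of_supSupp_lt (show supSupp X.1 < (j : ℕ) + 1 from ?_)).symm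
        have h1 : supSupp X.1 < ask X := hba
        omega
    · -- gX Z (p-1) ≤ -ent Z.1 (p-1)
      have hent : ent Z.1 (p - 1) = ent X.1 (p - 1) := by
        have h' : ent Z.1 (p - 1) = ent X.1 (p - 1) + ent (z • e i) (p - 1) := ent_add
        rw [h', ent_smul_e hi0 hi2, if_neg (by omega)]
        omega
      rw [hg (p - 1), hent]
      rcases Nat.lt_or_ge (p - 1) (ask X) with h | h
      · have hS : SX X (p - 1) = 0 := SX_eq_zero h
        have hB : ent X.1 (p - 1) ≤ BX X (p - 1) := ent_le_BX
        rw [hS]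
        split <;> omega
      · have hS : SX X (p - 1) < z := hpmin (p - 1) (by omega)
        have hent0 : ent X.1 (p - 1) = 0 := ent_zero_of_gt_bid (by omega)
        rw [hent0]
        split <;> omega
  have hcm : clearMinus Z =
      tauHigh ((p : ℤ) + 1) X.2 + (SX X p - z) • e p := by
    rcases Nat.lt_or_ge z (SX X p) with hcase | hcase
    · -- partially filled at p
      have hpA : pA Z = p := by
        apply pA_eq hp1 hpd
        · intro k hk1 hk2
          have h1 : SX X k < z := hpmin k (by omega)
          rw [hg k, if_pos (by omega)]
          omega
        · rw [hg p, if_pos (by omega), BX_eq_zero (by omega)]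
          omega
      have hgp : gX Z p = (SX X p : ℤ) - z := by
        rw [hg p, if_pos (by omega), BX_eq_zero (by omega)]
        push_cast
        ring
      have hentp : ent Z.2 p = X.2 ⟨p - 1, by omega⟩ := ent_eq hp1 hpd
      have hSsucc : SX X p = SX X (p - 1) + X.2 ⟨p - 1, by omega⟩ := SX_succ hp1 hpd
      have hSpred : SX X (p - 1) < z := hpmin (p - 1) (by omega)
      rw [clearMinus, hpA, if_neg (by rw [hentp, hgp]; omega)]
      funext j
      have htoNat : (max 0 (gX Z p)).toNat = SX X p - z := by
        rw [hgp, max_eq_right (by omega)]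
        omega
      rw [htoNat]
      rfl
    · -- S p = z : exact fill
      have hSp : SX X p = z := by omega
      have hd1 : 1 ≤ d := by omega
      -- pA Z exists: g_Z d > 0
      have hgd : 0 < gX Z d := by
        rw [hg d, BX_eq_zero (by omega)]
        rcases Nat.lt_or_ge i d with h | h
        · rw [if_neg (by omega)]
          have : SX X p ≤ SX X d := SX_mono (by omega)
          omega
        · have hid : i = d := by omega
          rw [if_pos (by omega)]
          omega
      obtain ⟨⟨hq1, hqd, hqpos⟩, hqmin⟩ :=
        pA_spec (Y := Z) (Finset.mem_Icc.2 ⟨hd1, le_rfl⟩) hgd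
      set q := pA Z with hqdef
      have hqp : p < q := by
        by_contra hc
        push_neg at hc
        rcases Nat.lt_or_ge q p with h | h
        · have h1 : SX X q < z := hpmin q h
          rw [hg q, if_pos (by omega)] at hqpos
          omega
        · have hqep : q = p := by omega
          rw [hg q, if_pos (by omega), hqep, hSp, BX_eq_zero (by omega)] at hqpos
          omega
      have hSflat : ∀ k, p ≤ k → k < q → SX X k = z := by
        intro k hk1 hk2
        have hk3 : 1 ≤ k := by omega
        have hk4 : k ≤ d := by omega
        have hSk : SX X p ≤ SX X k := SX_mono hk1
        by_contra hc
        rcases Nat.lt_or_ge i k with h | h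
        · -- then g_Z k = S k > 0, contradiction with minimality
          have : 0 < gX Z k := by
            rw [hg k, if_neg (by omega), BX_eq_zero (by omega)]
            omega
          have := hqmin k hk3 hk4 this
          omega
        · have : 0 < gX Z k := by
            rw [hg k, if_pos (by omega), BX_eq_zero (by omega)]
            omega
          have := hqmin k hk3 hk4 this
          omega
      have hSq1 : SX X (q - 1) = z := hSflat (q - 1) (by omega) (by omega)
      have hentq : ent Z.2 q = X.2 ⟨q - 1, by omega⟩ := ent_eq hq1 hqd
      have hSsq : SX X q = SX X (q - 1) + X.2 ⟨q - 1, by omega⟩ := SX_succ hq1 hqd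
      rw [clearMinus, if_pos]
      · funext j
        show tauHigh (q : ℤ) X.2 j
            = tauHigh ((p : ℤ) + 1) X.2 j + (SX X p - z) * e p j
        have hz0 : SX X p - z = 0 := by omega
        rw [hz0, tauHigh, tauHigh]
        simp only [zero_mul, add_zero]
        by_cases h1 : (q : ℤ) ≤ (j : ℕ) + 1
        · rw [if_pos h1, if_pos (by omega)]
        · rw [if_neg h1]
          by_cases h2 : ((p : ℤ) + 1) ≤ (j : ℕ) + 1
          · rw [if_pos h2]
            -- p + 1 ≤ j + 1 < q : entry is flat, so zero
            have ha : SX X ((j : ℕ) + 1) = z := hSflat ((j : ℕ) + 1) (by omega) (by omega)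
            have hb' : SX X (j : ℕ) = z := by
              rcases Nat.eq_or_lt_of_le (show p ≤ (j : ℕ) by omega) with h3 | h3
              · rw [← h3]; exact hSp
              · exact hSflat (j : ℕ) (by omega) (by omega)
            have hsucc : SX X ((j : ℕ) + 1) = SX X (j : ℕ) + X.2 ⟨j, by omega⟩ := by
              have := SX_succ (X := X) (k := (j : ℕ) + 1) (by omega) (by omega)
              simpa using this
            have : X.2 ⟨(j : ℕ), by omega⟩ = 0 := by omega
            have hjj : (⟨(j : ℕ), by omega⟩ : Fin d) = j := by
              apply Fin.ext
              rfl
            rw [← hjj]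
            omega
          · rw [if_neg h2]
      · -- ent Z.2 q ≤ g_Z q
        rw [hentq, hg q, BX_eq_zero (by omega)]
        split <;> omega
  rw [clear, hcp, hcm]


/-! ### clearing of a partially marketable sell order -/

lemma clear_sell_partial {i z : ℕ} (hX : X ∈ Lset d) (hi1 : 1 ≤ i) (hi2 : i ≤ bid X)
    (hz : BX X i < z) :
    clear ((X.1, X.2 + z • e i) : E d) =
      (tauLow ((i : ℤ) - 1) X.1, X.2 + (z - BX X i) • e i) := by
  have hba : bid X < ask X := hX
  have hbd : bid X ≤ d := supSupp_le_d
  have hid : i ≤ d := le_trans hi2 hbd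
  obtain ⟨jb, hjb, hjbpos⟩ := exists_supSupp (Z := X.1) (le_trans hi1 hi2)
  have hBbid : 0 < BX X (bid X) :=
    lt_of_lt_of_le hjbpos (le_BX (show bid X ≤ (jb : ℕ) + 1 from ge_of_eq hjb))
  have hBi : 0 < BX X i := lt_of_lt_of_le hBbid (BX_anti hi2)
  have hz1 : 1 ≤ z := by omega
  set Z : E d := (X.1, X.2 + z • e i) with hZdef
  have hg : ∀ k, gX Z k = (SX X k : ℤ) + (if i ≤ k then (z : ℤ) else 0) - BX X k :=
    fun k => gX_addM hi1 hid
  have hpA : pA Z = i := by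
    apply pA_eq hi1 hid
    · intro k hk1 hk2
      rw [hg k, SX_eq_zero (by omega), if_neg (by omega)]
      omega
    · rw [hg i, if_pos le_rfl]
      omega
  have hcm : clearMinus Z = X.2 + (z - BX X i) • e i := by
    have hent : ent Z.2 i = z := by
      have h' : ent Z.2 i = ent X.2 i + ent (z • e i) i := ent_add
      rw [h', ent_smul_e hi1 hid, if_pos rfl, ent_zero_of_lt_ask (by omega)]
      omega
    have hgi : gX Z i = (z : ℤ) - BX X i := by
      rw [hg i, if_pos le_rfl, SX_eq_zero (by omega)]
      ring
    rw [clearMinus, hpA, if_neg (by rw [hent, hgi]; omega)]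
    funext j
    have htoNat : (max 0 (gX Z i)).toNat = z - BX X i := by
      rw [hgi, max_eq_right (by omega)]
      omega
    rw [htoNat]
    show tauHigh ((i : ℤ) + 1) Z.2 j + (z - BX X i) * e i j
      = X.2 j + (z - BX X i) * e i j
    congr 1
    rw [tauHigh]
    by_cases hji : ((i : ℤ) + 1) ≤ (j : ℕ) + 1
    · rw [if_pos hji]
      show X.2 j + z * e i j = X.2 j
      rw [e_ne (by omega)]
      ring
    · rw [if_neg hji]
      refine (eq_zero_of_lt_infSupp (show (j : ℕ) + 1 < infSupp X.2 from ?_)).symm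
      have h1 : supSupp X.1 < infSupp X.2 := hba
      have h2 : i ≤ supSupp X.1 := hi2
      omega
  have hpB : pB Z = i - 1 := by
    apply pB_eq (by omega)
    · intro k hk1 hk2
      have hBk : BX X (bid X) ≤ BX X k := BX_anti (by omega)
      rw [hg k, SX_eq_zero (by omega), if_neg (by omega)]
      omega
    · intro k hk1 hk2
      have hBk : BX X k ≤ BX X i := BX_anti (by omega)
      rw [hg k, if_pos (by omega)]
      omega
  have hcp : clearPlus Z = tauLow ((i : ℤ) - 1) X.1 := by
    rw [clearPlus, hpB, if_pos]
    · show tauLow (((i - 1 : ℕ) : ℤ)) X.1 = tauLow ((i : ℤ) - 1) X.1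
      rw [Nat.cast_sub hi1, Nat.cast_one]
    · have hent : ent Z.1 (i - 1) ≤ BX X (i - 1) := ent_le_BX (X := X)
      rw [hg (i - 1), SX_eq_zero (by omega), if_neg (by omega)]
      have hent' : ent Z.1 (i - 1) = ent X.1 (i - 1) := rfl
      omega
  rw [clear, hcp, hcm]

/-! ### clearing of a fully marketable sell order -/

lemma clear_sell_full {i z : ℕ} (hX : X ∈ Lset d) (hz1 : 1 ≤ z) (hzB : z < BX X 1)
    (hi1 : 1 ≤ i) (hqi : i ≤ Binv X z) :
    clear ((X.1, X.2 + z • e i) : E d) =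
      (tauLow ((Binv X z : ℤ) - 1) X.1 + (BX X (Binv X z) - z) • e (Binv X z), X.2) := by
  have hba : bid X < ask X := hX
  have hbd : bid X ≤ d := supSupp_le_d
  obtain ⟨hq1, hqd, hqB, hqmax⟩ := Binv_spec hz1 (le_of_lt hzB)
  set q := Binv X z with hqdef
  have hqb : q ≤ bid X := Binv_le_bid hz1
  have hid : i ≤ d := by omega
  set Z : E d := (X.1, X.2 + z • e i) with hZdef
  have hg : ∀ k, gX Z k = (SX X k : ℤ) + (if i ≤ k then (z : ℤ) else 0) - BX X k :=
    fun k => gX_addM hi1 hid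
  have hgle : ∀ k, 1 ≤ k → k ≤ q → gX Z k ≤ 0 := by
    intro k hk1 hk2
    have hBk : BX X q ≤ BX X k := BX_anti hk2
    rw [hg k, SX_eq_zero (by omega)]
    split <;> omega
  have hpA : pA Z = q + 1 := by
    rcases Nat.lt_or_ge q d with h | h
    · apply pA_eq (by omega) (by omega)
      · intro k hk1 hk2
        exact hgle k hk1 (by omega)
      · have hB1 : BX X (q + 1) < z := hqmax (q + 1) (by omega)
        rw [hg (q + 1), if_pos (by omega)]
        omega
    · have htop : pA Z = d + 1 := pA_eq_top (by
        intro k hk1 hk2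
        exact hgle k hk1 (by omega))
      omega
  have hcm : clearMinus Z = X.2 := by
    rw [clearMinus, hpA, if_pos]
    · funext j
      rw [tauHigh]
      by_cases hji : ((q + 1 : ℕ) : ℤ) ≤ (j : ℕ) + 1
      · rw [if_pos hji]
        show X.2 j + z * e i j = X.2 j
        rw [e_ne (by omega)]
        ring
      · rw [if_neg hji]
        refine (eq_zero_of_lt_infSupp (show (j : ℕ) + 1 < infSupp X.2 from ?_)).symm
        have h1 : supSupp X.1 < infSupp X.2 := hba
        have h2 : q ≤ supSupp X.1 := hqb
        omega
    · have hent : ent Z.2 (q + 1) = ent X.2 (q + 1) := by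
        have h' : ent Z.2 (q + 1) = ent X.2 (q + 1) + ent (z • e i) (q + 1) := ent_add
        rw [h', ent_smul_e hi1 hid, if_neg (by omega)]
        omega
      have hent2 : ent X.2 (q + 1) ≤ SX X (q + 1) := ent_le_SX
      have hB1 : BX X (q + 1) < z := hqmax (q + 1) (by omega)
      rw [hent, hg (q + 1), if_pos (by omega)]
      omega
  have hcp : clearPlus Z =
      tauLow ((q : ℤ) - 1) X.1 + (BX X q - z) • e q := by
    rcases Nat.lt_or_ge z (BX X q) with hcase | hcase
    · -- B q > z
      have hpB : pB Z = q := by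
        apply pB_eq hqd
        · intro k hk1 hk2
          have hBk : BX X q ≤ BX X k := BX_anti hk2
          rw [hg k, SX_eq_zero (by omega)]
          split <;> omega
        · intro k hk1 hk2
          have hBk : BX X k < z := hqmax k (by omega)
          rw [hg k]
          split <;> omega
      have hgq : gX Z q = (z : ℤ) - BX X q := by
        rw [hg q, if_pos (by omega), SX_eq_zero (by omega)]
        ring
      have hentq : ent Z.1 q = X.1 ⟨q - 1, by omega⟩ := ent_eq hq1 hqd
      have hBsucc : BX X q = X.1 ⟨q - 1, by omega⟩ + BX X (q + 1) := BX_succ hq1 hqd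
      have hB1 : BX X (q + 1) < z := hqmax (q + 1) (by omega)
      rw [clearPlus, hpB, if_neg (by rw [hgq, hentq]; omega)]
      funext j
      have htoNat : (max 0 (-gX Z q)).toNat = BX X q - z := by
        rw [hgq, max_eq_right (by omega)]
        omega
      rw [htoNat]
      rfl
    · -- B q = z : exact fill
      have hBq : BX X q = z := by omega
      have hg1 : gX Z 1 < 0 := by
        have hB1 : BX X 1 ≥ BX X q ∨ True := Or.inr trivial
        rw [hg 1, SX_eq_zero (by omega)]
        rcases Nat.lt_or_ge 1 i with h | h
        · rw [if_neg (by omega)]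
          have : BX X q ≤ BX X 1 := BX_anti (by omega)
          omega
        · have hieq : i = 1 := by omega
          rw [if_pos (by omega)]
          omega
      obtain ⟨⟨hr1, hrd, hrneg⟩, hrmax⟩ :=
        pB_spec (Y := Z) (Finset.mem_Icc.2 ⟨le_rfl, by omega⟩) hg1
      set r := pB Z with hrdef
      have hgq0 : gX Z q = 0 := by
        rw [hg q, if_pos (by omega), SX_eq_zero (by omega), hBq]
        ring
      have hrq : r < q := by
        rcases Nat.lt_or_ge r q with h | h
        · exact h
        · rcases Nat.eq_or_lt_of_le h with h2 | h2
          · rw [h2] at hgq0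
            omega
          · have hBr : BX X r < z := hqmax r h2
            rw [hg r] at hrneg
            have hS : (0 : ℤ) ≤ (SX X r : ℤ) := by positivity
            split at hrneg <;> omega
      have hflat : ∀ k, r < k → k ≤ q → BX X k = z := by
        intro k hk1 hk2
        have hk3 : 1 ≤ k := by omega
        have hk4 : k ≤ d := by omega
        have hBk : BX X q ≤ BX X k := BX_anti hk2
        by_contra hc
        have hneg : gX Z k < 0 := by
          rw [hg k, SX_eq_zero (by omega)]
          split <;> omega
        have := hrmax k hk3 hk4 hneg
        omega
      have hBr1 : BX X (r + 1) = z := hflat (r + 1) (by omega) (by omega)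
      rw [clearPlus, if_pos]
      · funext j
        show tauLow (r : ℤ) X.1 j
            = tauLow ((q : ℤ) - 1) X.1 j + (BX X q - z) * e q j
        have hz0 : BX X q - z = 0 := by omega
        rw [hz0, tauLow, tauLow]
        simp only [zero_mul, add_zero]
        by_cases h1 : ((j : ℕ) + 1 : ℤ) ≤ (r : ℤ)
        · rw [if_pos h1, if_pos (by omega)]
        · rw [if_neg h1]
          by_cases h2 : ((j : ℕ) + 1 : ℤ) ≤ (q : ℤ) - 1
          · rw [if_pos h2]
            have ha : BX X ((j : ℕ) + 1) = z := hflat ((j : ℕ) + 1) (by omega) (by omega)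
            have hb' : BX X ((j : ℕ) + 2) = z := hflat ((j : ℕ) + 2) (by omega) (by omega)
            have hsucc : BX X ((j : ℕ) + 1) = X.1 ⟨(j : ℕ), by omega⟩ + BX X ((j : ℕ) + 2) := by
              have h3 := BX_succ (X := X) (k := (j : ℕ) + 1) (by omega) (by omega)
              simpa using h3
            have hjj : (⟨(j : ℕ), by omega⟩ : Fin d) = j := by
              apply Fin.ext
              rfl
            rw [← hjj]
            omega
          · rw [if_neg h2]
      · -- gX Z r ≤ -ent Z.1 r
        have hentr : ent Z.1 r = X.1 ⟨r - 1, by omega⟩ := ent_eq hr1 hrd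
        have hBsucc : BX X r = X.1 ⟨r - 1, by omega⟩ + BX X (r + 1) := BX_succ hr1 hrd
        rw [hentr, hg r, SX_eq_zero (by omega)]
        split <;> omega
  rw [clear, hcp, hcm]


/-! ### series infrastructure -/

section Series

variable {lamP lamM canP canM : ℕ → E d → ℕ → ℝ} {M α : ℝ}

/-- One order-flow event term of the kernel `p_o(X, ·)`. -/
noncomputable def term (lamP lamM canP canM : ℕ → E d → ℕ → ℝ) (X : E d)
    (z i : ℕ) (W : E d) : ℝ :=
  (if W = (X.1 + (z + 1) • e i, X.2) then lamP i X (z + 1) else 0) +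
  (if W = (X.1, X.2 + (z + 1) • e i) then lamM i X (z + 1) else 0) +
  (if W = (X.1 - (z + 1) • e i, X.2) then canP i X (z + 1) else 0) +
  (if W = (X.1, X.2 - (z + 1) • e i) then canM i X (z + 1) else 0)

lemma po_eq (X W : E d) :
    po lamP lamM canP canM X W = ∑' z : ℕ, ∑ i ∈ Finset.Icc 1 d,
      term lamP lamM canP canM X z i W := rfl

/-- The finite set of possible order-flow events of size `z+1`. -/
noncomputable def Sset (X : E d) (z : ℕ) : Finset (E d) :=
  (Finset.Icc 1 d).biUnion fun i =>
    {(X.1 + (z + 1) • e i, X.2), (X.1, X.2 + (z + 1) • e i),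
     (X.1 - (z + 1) • e i, X.2), (X.1, X.2 - (z + 1) • e i)}

lemma term_nonneg (hI : IntensityAssumptions lamP lamM canP canM M α)
    {X : E d} {z i : ℕ} (hi : i ∈ Finset.Icc 1 d) (W : E d) :
    0 ≤ term lamP lamM canP canM X z i W := by
  obtain ⟨hM, hα, hIb⟩ := hI
  obtain ⟨hnn, -⟩ := hIb i hi X (z + 1) (by omega)
  unfold term
  have h1 := hnn.1
  have h2 := hnn.2.1
  have h3 := hnn.2.2.1
  have h4 := hnn.2.2.2
  split <;> split <;> split <;> split <;> simp <;> positivity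

lemma term_eq_zero {X : E d} {z i : ℕ} (hi : i ∈ Finset.Icc 1 d) {W : E d}
    (hW : W ∉ Sset X z) : term lamP lamM canP canM X z i W = 0 := by
  have h : ∀ V ∈ ({(X.1 + (z + 1) • e i, X.2), (X.1, X.2 + (z + 1) • e i),
      (X.1 - (z + 1) • e i, X.2), (X.1, X.2 - (z + 1) • e i)} : Finset (E d)),
      W ≠ V := by
    intro V hV
    intro hc
    exact hW (Finset.mem_biUnion.2 ⟨i, hi, by rw [hc]; exact hV⟩)
  unfold term
  rw [if_neg (h _ (by simp)), if_neg (h _ (by simp)), if_neg (h _ (by simp)),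
    if_neg (h _ (by simp))]
  norm_num

lemma term_le (hI : IntensityAssumptions lamP lamM canP canM M α)
    {X : E d} {z i : ℕ} (hi : i ∈ Finset.Icc 1 d) (W : E d) :
    term lamP lamM canP canM X z i W ≤ 4 * (M / ((1 : ℝ) + ((z + 1 : ℕ) : ℝ)) ^ α) := by
  obtain ⟨hM, hα, hIb⟩ := hI
  obtain ⟨hnn, -, hle, -⟩ := hIb i hi X (z + 1) (by omega)
  have hβ : 0 ≤ M / ((1 : ℝ) + ((z + 1 : ℕ) : ℝ)) ^ α := by
    apply div_nonneg hM.le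
    positivity
  have h1 := hle.1
  have h2 := hle.2.1
  have h3 := hle.2.2.1
  have h4 := hle.2.2.2
  unfold term
  split <;> split <;> split <;> split <;> linarith

lemma beta_summable (hM : 0 < M) (hα : 1 < α) :
    Summable (fun z : ℕ => M / ((1 : ℝ) + ((z + 1 : ℕ) : ℝ)) ^ α) := by
  have h0 : Summable (fun n : ℕ => ((n : ℝ) ^ α)⁻¹) := Real.summable_nat_rpow_inv.2 hα
  have h1 : Summable (fun n : ℕ => (((n + 2 : ℕ) : ℝ) ^ α)⁻¹) := by
    exact (summable_nat_add_iff 2).2 h0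
  apply ((h1.mul_left M).congr)
  intro z
  rw [div_eq_mul_inv]
  congr 3
  push_cast
  ring

end Series


/-! ### the cleared states of order-flow events are admissible -/

lemma mem_Lset_of_split {Y : E d} {m : ℕ} (hm : m ≤ d)
    (h1 : ∀ j, 0 < Y.1 j → (j : ℕ) + 1 ≤ m) (h2 : ∀ j, 0 < Y.2 j → m < (j : ℕ) + 1) :
    Y ∈ Lset d := by
  show bid Y < ask Y
  have hb : bid Y ≤ m := by
    rw [bid, supSupp]
    apply Finset.sup_le
    intro k hk
    rcases mem_supp_iff.1 hk with ⟨j, hj, hpos⟩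
    have := h1 j hpos
    simp only [id_eq]
    omega
  have ha : m < ask Y := lt_infSupp hm (h2 ·)
  omega

lemma clear_buy_mem (hX : X ∈ Lset d) {i z : ℕ} (hi1 : 1 ≤ i) (hi2 : i ≤ d)
    (hz1 : 1 ≤ z) (hzS : z < SX X d) :
    clear ((X.1 + z • e i, X.2) : E d) ∈ Lset d := by
  have hba : bid X < ask X := hX
  by_cases hia : i < ask X
  · rw [clear_fix (mem_Lset_addP hX hia)]
    exact mem_Lset_addP hX hia
  push_neg at hia
  by_cases hS : SX X i < z
  · rw [clear_buy_partial hX hia hi2 hS]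
    apply mem_Lset_of_split (m := i) hi2
    · intro j hj
      have hval : 0 < X.1 j + (z - SX X i) * e i j := hj
      rcases Nat.eq_zero_or_pos (X.1 j) with h0 | h0
      · have he : e (d := d) i j ≠ 0 := by intro hc; rw [hc] at hval; omega
        have : (j : ℕ) + 1 = i := by by_contra hc; exact he (e_ne hc)
        omega
      · have h1 := le_supSupp h0
        have h2 : supSupp X.1 < ask X := hX
        omega
    · intro j hj
      have hval : 0 < tauHigh ((i : ℤ) + 1) X.2 j := hj
      rw [tauHigh] at hval
      split at hval
      · rename_i hc; omega
      · omega
  · push_neg at hS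
    have hpi : Sinv X z ≤ i := by
      by_contra hc
      push_neg at hc
      have := SX_lt_of_lt_Sinv hz1 hc hi2
      omega
    rw [clear_buy_full hX hz1 hzS hpi hi2]
    obtain ⟨hp1, hpd, -, -⟩ := Sinv_spec hz1 hzS.le
    have hap : ask X ≤ Sinv X z := ask_le_Sinv hz1
    apply mem_Lset_of_split (m := Sinv X z - 1) (by omega)
    · intro j hj
      have hj' : 0 < X.1 j := hj
      have h1 := le_supSupp hj'
      have h2 : supSupp X.1 < ask X := hX
      omega
    · intro j hj
      have hval : 0 < tauHigh ((Sinv X z : ℤ) + 1) X.2 j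
          + (SX X (Sinv X z) - z) * e (Sinv X z) j := hj
      rcases Nat.eq_zero_or_pos (tauHigh ((Sinv X z : ℤ) + 1) X.2 j) with h0 | h0
      · rw [h0] at hval
        have he : e (d := d) (Sinv X z) j ≠ 0 := by intro hc; rw [hc] at hval; omega
        have : (j : ℕ) + 1 = Sinv X z := by by_contra hc; exact he (e_ne hc)
        omega
      · rw [tauHigh] at h0
        split at h0
        · rename_i hc; omega
        · omega

lemma clear_sell_mem (hX : X ∈ Lset d) {i z : ℕ} (hi1 : 1 ≤ i) (hi2 : i ≤ d)
    (hz1 : 1 ≤ z) (hzB : z < BX X 1) :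
    clear ((X.1, X.2 + z • e i) : E d) ∈ Lset d := by
  have hba : bid X < ask X := hX
  by_cases hib : bid X < i
  · rw [clear_fix (mem_Lset_addM hX hib hi2)]
    exact mem_Lset_addM hX hib hi2
  push_neg at hib
  by_cases hB : BX X i < z
  · rw [clear_sell_partial hX hi1 hib hB]
    apply mem_Lset_of_split (m := i - 1) (by omega)
    · intro j hj
      have hval : 0 < tauLow ((i : ℤ) - 1) X.1 j := hj
      rw [tauLow] at hval
      split at hval
      · rename_i hc; omega
      · omega
    · intro j hj
      have hval : 0 < X.2 j + (z - BX X i) * e i j := hj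
      rcases Nat.eq_zero_or_pos (X.2 j) with h0 | h0
      · have he : e (d := d) i j ≠ 0 := by intro hc; rw [hc] at hval; omega
        have : (j : ℕ) + 1 = i := by by_contra hc; exact he (e_ne hc)
        omega
      · have h1 := infSupp_le h0
        have h2 : supSupp X.1 < infSupp X.2 := hX
        have h3 : i ≤ supSupp X.1 := hib
        omega
  · push_neg at hB
    have hqi : i ≤ Binv X z := by
      by_contra hc
      push_neg at hc
      have := BX_lt_of_Binv_lt hz1 hc
      omega
    rw [clear_sell_full hX hz1 hzB hi1 hqi]
    obtain ⟨hq1, hqd, -, -⟩ := Binv_spec hz1 hzB.le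
    have hqb : Binv X z ≤ bid X := Binv_le_bid hz1
    apply mem_Lset_of_split (m := Binv X z) hqd
    · intro j hj
      have hval : 0 < tauLow ((Binv X z : ℤ) - 1) X.1 j
          + (BX X (Binv X z) - z) * e (Binv X z) j := hj
      rcases Nat.eq_zero_or_pos (tauLow ((Binv X z : ℤ) - 1) X.1 j) with h0 | h0
      · rw [h0] at hval
        have he : e (d := d) (Binv X z) j ≠ 0 := by intro hc; rw [hc] at hval; omega
        have : (j : ℕ) + 1 = Binv X z := by by_contra hc; exact he (e_ne hc)
        omega
      · rw [tauLow] at h0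
        split at h0
        · rename_i hc; omega
        · omega
    · intro j hj
      have hj' : 0 < X.2 j := hj
      have h1 := infSupp_le hj'
      have h2 : supSupp X.1 < infSupp X.2 := hX
      have h3 : bid X = supSupp X.1 := rfl
      omega

lemma clear_subP_mem (hX : X ∈ Lset d) (v : Fin d → ℕ) :
    clear ((X.1 - v, X.2) : E d) ∈ Lset d := by
  have hm : ((X.1 - v, X.2) : E d) ∈ Lset d :=
    mem_Lset_subP hX (fun j => Nat.sub_le _ _)
  rw [clear_fix hm]
  exact hm

lemma clear_subM_mem (hX : X ∈ Lset d) (v : Fin d → ℕ) :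
    clear ((X.1, X.2 - v) : E d) ∈ Lset d := by
  have hm : ((X.1, X.2 - v) : E d) ∈ Lset d :=
    mem_Lset_subM hX (fun j => Nat.sub_le _ _)
  rw [clear_fix hm]
  exact hm

lemma zero_mem_Lset : ((0, 0) : E d) ∈ Lset d := by
  show bid _ < ask _
  have h1 : supp ((0, 0) : E d).1 = ∅ := by
    unfold supp
    apply Finset.image_eq_empty.2
    apply Finset.filter_eq_empty_iff.2
    intro j _
    simp
  have h2 : supp ((0, 0) : E d).2 = ∅ := h1
  rw [bid, ask, supSupp, infSupp, h1]
  simp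


/-! ### summability machinery -/

section Series2

variable {lamP lamM canP canM : ℕ → E d → ℕ → ℝ} {M α : ℝ}

lemma summable_mul_single (A : E d) (v : ℝ) (g : E d → ℝ) :
    Summable fun W : E d => (if W = A then v else 0) * g W := by
  apply summable_of_ne_finset_zero (s := {A})
  intro W hW
  rw [if_neg (by simpa using hW), zero_mul]

lemma tsum_mul_single (A : E d) (v : ℝ) (g : E d → ℝ) :
    ∑' W : E d, (if W = A then v else 0) * g W = v * g A := by
  rw [tsum_eq_single A]
  · rw [if_pos rfl]
  · intro W hW
    rw [if_neg hW, zero_mul]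

lemma term_mul_summable (X : E d) (z i : ℕ) (g : E d → ℝ) :
    Summable fun W : E d => term lamP lamM canP canM X z i W * g W := by
  have h : (fun W : E d => term lamP lamM canP canM X z i W * g W) =
      fun W =>
        (if W = (X.1 + (z + 1) • e i, X.2) then lamP i X (z + 1) else 0) * g W +
        ((if W = (X.1, X.2 + (z + 1) • e i) then lamM i X (z + 1) else 0) * g W +
         ((if W = (X.1 - (z + 1) • e i, X.2) then canP i X (z + 1) else 0) * g W +
          (if W = (X.1, X.2 - (z + 1) • e i) then canM i X (z + 1) else 0) * g W)) := by
    funext W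
    unfold term
    ring
  rw [h]
  exact (summable_mul_single _ _ g).add ((summable_mul_single _ _ g).add
    ((summable_mul_single _ _ g).add (summable_mul_single _ _ g)))

lemma tsum_term_mul (X : E d) (z i : ℕ) (g : E d → ℝ) :
    ∑' W : E d, term lamP lamM canP canM X z i W * g W =
      lamP i X (z + 1) * g (X.1 + (z + 1) • e i, X.2) +
      lamM i X (z + 1) * g (X.1, X.2 + (z + 1) • e i) +
      canP i X (z + 1) * g (X.1 - (z + 1) • e i, X.2) +
      canM i X (z + 1) * g (X.1, X.2 - (z + 1) • e i) := by
  have h : (fun W : E d => term lamP lamM canP canM X z i W * g W) =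
      fun W =>
        (if W = (X.1 + (z + 1) • e i, X.2) then lamP i X (z + 1) else 0) * g W +
        ((if W = (X.1, X.2 + (z + 1) • e i) then lamM i X (z + 1) else 0) * g W +
         ((if W = (X.1 - (z + 1) • e i, X.2) then canP i X (z + 1) else 0) * g W +
          (if W = (X.1, X.2 - (z + 1) • e i) then canM i X (z + 1) else 0) * g W)) := by
    funext W
    unfold term
    ring
  rw [h, Summable.tsum_add (summable_mul_single _ _ g) ((summable_mul_single _ _ g).add
      ((summable_mul_single _ _ g).add (summable_mul_single _ _ g))),
    Summable.tsum_add (summable_mul_single _ _ g)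
      ((summable_mul_single _ _ g).add (summable_mul_single _ _ g)),
    Summable.tsum_add (summable_mul_single _ _ g) (summable_mul_single _ _ g),
    tsum_mul_single, tsum_mul_single, tsum_mul_single, tsum_mul_single]
  ring

lemma usum_nonneg (hI : IntensityAssumptions lamP lamM canP canM M α) (X : E d)
    (z : ℕ) (W : E d) :
    0 ≤ ∑ i ∈ Finset.Icc 1 d, term lamP lamM canP canM X z i W :=
  Finset.sum_nonneg fun i hi => term_nonneg hI hi W

lemma usum_zero (X : E d) (z : ℕ) {W : E d} (hW : W ∉ Sset X z) :
    (∑ i ∈ Finset.Icc 1 d, term lamP lamM canP canM X z i W) = 0 :=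
  Finset.sum_eq_zero fun i hi => term_eq_zero hi hW

lemma sum_Sset_term_le (hI : IntensityAssumptions lamP lamM canP canM M α) (X : E d)
    {z i : ℕ} (hi : i ∈ Finset.Icc 1 d) :
    ∑ W ∈ Sset X z, term lamP lamM canP canM X z i W ≤
      4 * (M / ((1 : ℝ) + ((z + 1 : ℕ) : ℝ)) ^ α) := by
  obtain ⟨hM, hα, hIb⟩ := hI
  obtain ⟨hnn, -, hle, -⟩ := hIb i hi X (z + 1) (by omega)
  have hβ : 0 ≤ M / ((1 : ℝ) + ((z + 1 : ℕ) : ℝ)) ^ α := by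
    apply div_nonneg hM.le
    positivity
  unfold term
  rw [Finset.sum_add_distrib, Finset.sum_add_distrib, Finset.sum_add_distrib]
  have key : ∀ (A : E d) (v : ℝ), 0 ≤ v → v ≤ M / ((1 : ℝ) + ((z + 1 : ℕ) : ℝ)) ^ α →
      (∑ W ∈ Sset X z, if W = A then v else 0) ≤
        M / ((1 : ℝ) + ((z + 1 : ℕ) : ℝ)) ^ α := by
    intro A v hv hvle
    rw [Finset.sum_ite_eq' (Sset X z) A fun _ => v]
    split <;> linarith
  have k1 := key (X.1 + (z + 1) • e i, X.2) _ hnn.1 hle.1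
  have k2 := key (X.1, X.2 + (z + 1) • e i) _ hnn.2.1 hle.2.1
  have k3 := key (X.1 - (z + 1) • e i, X.2) _ hnn.2.2.1 hle.2.2.1
  have k4 := key (X.1, X.2 - (z + 1) • e i) _ hnn.2.2.2 hle.2.2.2
  linarith

lemma master_summable (hI : IntensityAssumptions lamP lamM canP canM M α) (X : E d)
    {g : E d → ℝ} {C : ℝ} (hg : ∀ W, |g W| ≤ C) :
    Summable (Function.uncurry fun (z : ℕ) (W : E d) =>
      (∑ i ∈ Finset.Icc 1 d, term lamP lamM canP canM X z i W) * g W) := by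
  obtain ⟨hM, hα, -⟩ := id hI
  have hC : 0 ≤ C := le_trans (abs_nonneg _) (hg (0, 0))
  rw [← summable_abs_iff]
  rw [summable_prod_of_nonneg (fun p => abs_nonneg _)]
  constructor
  · intro z
    apply summable_of_ne_finset_zero (s := Sset X z)
    intro W hW
    show |(∑ i ∈ Finset.Icc 1 d, term lamP lamM canP canM X z i W) * g W| = 0
    rw [usum_zero X z hW, zero_mul, abs_zero]
  · refine Summable.of_nonneg_of_le
      (f := fun z : ℕ => (4 * (M / ((1 : ℝ) + ((z + 1 : ℕ) : ℝ)) ^ α)) * ((d : ℝ) * C))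
      (fun z => tsum_nonneg fun W => abs_nonneg _) ?_ ?_
    · intro z
      show (∑' W : E d,
          |(∑ i ∈ Finset.Icc 1 d, term lamP lamM canP canM X z i W) * g W|) ≤
        (4 * (M / ((1 : ℝ) + ((z + 1 : ℕ) : ℝ)) ^ α)) * ((d : ℝ) * C)
      have h1 : ∑' W : E d,
            |(∑ i ∈ Finset.Icc 1 d, term lamP lamM canP canM X z i W) * g W| =
          ∑ W ∈ Sset X z,
            |(∑ i ∈ Finset.Icc 1 d, term lamP lamM canP canM X z i W) * g W| := by
        apply tsum_eq_sum
        intro W hW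
        rw [usum_zero X z hW, zero_mul, abs_zero]
      rw [h1]
      have h2 : ∀ W ∈ Sset X z,
          |(∑ i ∈ Finset.Icc 1 d, term lamP lamM canP canM X z i W) * g W| ≤
            (∑ i ∈ Finset.Icc 1 d, term lamP lamM canP canM X z i W) * C := by
        intro W _
        rw [abs_mul, abs_of_nonneg (usum_nonneg hI X z W)]
        exact mul_le_mul_of_nonneg_left (hg W) (usum_nonneg hI X z W)
      calc ∑ W ∈ Sset X z,
            |(∑ i ∈ Finset.Icc 1 d, term lamP lamM canP canM X z i W) * g W|
          ≤ ∑ W ∈ Sset X z,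
            (∑ i ∈ Finset.Icc 1 d, term lamP lamM canP canM X z i W) * C :=
            Finset.sum_le_sum h2
        _ = (∑ W ∈ Sset X z, ∑ i ∈ Finset.Icc 1 d,
              term lamP lamM canP canM X z i W) * C := by rw [Finset.sum_mul]
        _ ≤ ((d : ℝ) * (4 * (M / ((1 : ℝ) + ((z + 1 : ℕ) : ℝ)) ^ α))) * C := by
            apply mul_le_mul_of_nonneg_right _ hC
            rw [Finset.sum_comm]
            calc ∑ i ∈ Finset.Icc 1 d, ∑ W ∈ Sset X z,
                  term lamP lamM canP canM X z i W
                ≤ ∑ i ∈ Finset.Icc 1 d,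
                    4 * (M / ((1 : ℝ) + ((z + 1 : ℕ) : ℝ)) ^ α) :=
                  Finset.sum_le_sum fun i hi => sum_Sset_term_le hI X hi
              _ ≤ (d : ℝ) * (4 * (M / ((1 : ℝ) + ((z + 1 : ℕ) : ℝ)) ^ α)) := by
                  rw [Finset.sum_const, nsmul_eq_mul]
                  apply mul_le_mul_of_nonneg_right _ (by positivity)
                  simp [Nat.card_Icc]
        _ = (4 * (M / ((1 : ℝ) + ((z + 1 : ℕ) : ℝ)) ^ α)) * ((d : ℝ) * C) := by ring
    · apply Summable.mul_right
      exact (beta_summable hM hα).mul_left 4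

end Series2



/-- Corollary 3.6 of Cont–Degond–Xuan: explicit formula for the
generator of the order-book process. -/
theorem generator_explicit_formula (d : ℕ) (hd : 1 ≤ d)
    (lamP lamM canP canM : ℕ → E d → ℕ → ℝ) (M α : ℝ)
    (hI : IntensityAssumptions lamP lamM canP canM M α) :
    ∀ f : BoundedContinuousFunction (E d) ℝ, ∀ X ∈ Lset d,
      Lgen lamP lamM canP canM (⇑f) X =
        ∑' z : ℕ,
          ((∑ i ∈ Finset.Ico 1 (ask X),
              lamP i X (z + 1) * (f (X.1 + (z + 1) • e i, X.2) - f X)) +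
           (∑ i ∈ Finset.Ico (ask X) (Sinv X (z + 1)),
              lamP i X (z + 1) *
                (f (X.1 + ((z + 1) - SX X i) • e i, tauHigh ((i : ℤ) + 1) X.2) - f X)) +
           (∑ i ∈ Finset.Icc (Sinv X (z + 1)) d,
              lamP i X (z + 1) *
                (f (X.1, tauHigh ((Sinv X (z + 1) : ℤ) + 1) X.2 +
                      (SX X (Sinv X (z + 1)) - (z + 1)) • e (Sinv X (z + 1))) - f X)) +
           (∑ i ∈ Finset.Icc (bid X + 1) d,
              lamM i X (z + 1) * (f (X.1, X.2 + (z + 1) • e i) - f X)) +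
           (∑ i ∈ Finset.Icc (Binv X (z + 1) + 1) (bid X),
              lamM i X (z + 1) *
                (f (tauLow ((i : ℤ) - 1) X.1, X.2 + ((z + 1) - BX X i) • e i) - f X)) +
           (∑ i ∈ Finset.Icc 1 (Binv X (z + 1)),
              lamM i X (z + 1) *
                (f (tauLow ((Binv X (z + 1) : ℤ) - 1) X.1 +
                      (BX X (Binv X (z + 1)) - (z + 1)) • e (Binv X (z + 1)), X.2) - f X)) +
           (∑ i ∈ Finset.Icc 1 (bid X),
              canP i X (z + 1) * (f (X.1 - (z + 1) • e i, X.2) - f X)) +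
           (∑ i ∈ Finset.Icc (ask X) d,
              canM i X (z + 1) * (f (X.1, X.2 - (z + 1) • e i) - f X))) := by
  intro f X hX
  classical
  obtain ⟨hM, hα, hIb⟩ := id hI
  set c : E d → ℝ := fun W => f (clear W) - f X with hc_def
  have hcb : ∀ W, |c W| ≤ 2 * ‖f‖ := by
    intro W
    have h1 := f.norm_coe_le_norm (clear W)
    have h2 := f.norm_coe_le_norm X
    have h3 : ‖f (clear W) - f X‖ ≤ ‖f (clear W)‖ + ‖f X‖ := norm_sub_le _ _
    rw [Real.norm_eq_abs] at h3
    calc |c W| = |f (clear W) - f X| := rfl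
      _ ≤ ‖f (clear W)‖ + ‖f X‖ := h3
      _ ≤ 2 * ‖f‖ := by linarith
  have hW : Summable (Function.uncurry fun (z : ℕ) (W : E d) =>
      (∑ i ∈ Finset.Icc 1 d, term lamP lamM canP canM X z i W) * c W) :=
    master_summable hI X hcb
  have hkey0 : ∀ Z : E d, po lamP lamM canP canM X Z * c Z =
      ∑' z : ℕ, (∑ i ∈ Finset.Icc 1 d, term lamP lamM canP canM X z i Z) * c Z := by
    intro Z
    rw [po_eq]
    exact (tsum_mul_right).symm
  have hsum_h : Summable (fun Z : E d => po lamP lamM canP canM X Z * c Z) := by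
    have h2 := hW.prod_symm.prod
    exact h2.congr fun Z => (hkey0 Z).symm
  -- membership of cleared relevant states
  have hmem : ∀ Z : E d, po lamP lamM canP canM X Z * c Z ≠ 0 → clear Z ∈ Lset d := by
    intro Z hne
    have hpo : po lamP lamM canP canM X Z ≠ 0 := fun h0 => hne (by rw [h0, zero_mul])
    rw [po_eq] at hpo
    have hz : ∃ z, (∑ i ∈ Finset.Icc 1 d, term lamP lamM canP canM X z i Z) ≠ 0 := by
      by_contra hcon
      push_neg at hcon
      exact hpo (by rw [tsum_congr hcon]; exact tsum_zero)
    obtain ⟨z, hz⟩ := hz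
    have hiex : ∃ i ∈ Finset.Icc 1 d, term lamP lamM canP canM X z i Z ≠ 0 := by
      by_contra hcon
      push_neg at hcon
      exact hz (Finset.sum_eq_zero hcon)
    obtain ⟨i, hiIcc, hti⟩ := hiex
    have hi1 : 1 ≤ i := (Finset.mem_Icc.1 hiIcc).1
    have hi2 : i ≤ d := (Finset.mem_Icc.1 hiIcc).2
    obtain ⟨-, hvan, -, -, -⟩ := hIb i hiIcc X (z + 1) (by omega)
    have hdisj :
        ((if Z = (X.1 + (z + 1) • e i, X.2) then lamP i X (z + 1) else 0) ≠ 0) ∨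
        ((if Z = (X.1, X.2 + (z + 1) • e i) then lamM i X (z + 1) else 0) ≠ 0) ∨
        ((if Z = (X.1 - (z + 1) • e i, X.2) then canP i X (z + 1) else 0) ≠ 0) ∨
        ((if Z = (X.1, X.2 - (z + 1) • e i) then canM i X (z + 1) else 0) ≠ 0) := by
      by_contra hcon
      push_neg at hcon
      apply hti
      unfold term
      rw [hcon.1, hcon.2.1, hcon.2.2.1, hcon.2.2.2]
      ring
    have hminS : min (BX X 1) (SX X d) ≤ SX X d := min_le_right _ _
    have hminB : min (BX X 1) (SX X d) ≤ BX X 1 := min_le_left _ _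
    rcases hdisj with h | h | h | h
    · have hZ : Z = (X.1 + (z + 1) • e i, X.2) := by
        by_contra hcc
        rw [if_neg hcc] at h
        exact h rfl
      rw [if_pos hZ] at h
      have hzS : z + 1 < SX X d := by
        by_contra hcon
        push_neg at hcon
        exact h (hvan (by omega)).1
      rw [hZ]
      exact clear_buy_mem hX hi1 hi2 (by omega) hzS
    · have hZ : Z = (X.1, X.2 + (z + 1) • e i) := by
        by_contra hcc
        rw [if_neg hcc] at h
        exact h rfl
      rw [if_pos hZ] at h
      have hzB : z + 1 < BX X 1 := by
        by_contra hcon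
        push_neg at hcon
        exact h (hvan (by omega)).2.1
      rw [hZ]
      exact clear_sell_mem hX hi1 hi2 (by omega) hzB
    · have hZ : Z = (X.1 - (z + 1) • e i, X.2) := by
        by_contra hcc
        rw [if_neg hcc] at h
        exact h rfl
      rw [hZ]
      exact clear_subP_mem hX _
    · have hZ : Z = (X.1, X.2 - (z + 1) • e i) := by
        by_contra hcc
        rw [if_neg hcc] at h
        exact h rfl
      rw [hZ]
      exact clear_subM_mem hX _
  -- step 1 : collapse the double sum over Y ∈ L and Z with clear Z = Y
  set ψ : E d → ↥(Lset d) := fun Z =>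
    if hc : clear Z ∈ Lset d then ⟨clear Z, hc⟩ else ⟨((0, 0) : E d), zero_mem_Lset⟩
    with hψ_def
  have hψpos : ∀ (Z : E d) (h : clear Z ∈ Lset d), ψ Z = ⟨clear Z, h⟩ := by
    intro Z h
    simp only [hψ_def]
    rw [dif_pos h]
  have step1 : Lgen lamP lamM canP canM (⇑f) X =
      ∑' Z : E d, po lamP lamM canP canM X Z * c Z := by
    rw [Lgen]
    have hY : ∀ Y : ↥(Lset d),
        pker lamP lamM canP canM X Y.1 * (f Y.1 - f X) =
        ∑' Z : E d, if ψ Z = Y then po lamP lamM canP canM X Z * c Z else 0 := by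
      intro Y
      rw [pker, ← tsum_mul_right]
      apply tsum_congr
      intro Z
      by_cases hc1 : clear Z = (Y : E d)
      · rw [if_pos hc1]
        have hfy : (f (Y : E d) : ℝ) - f X = c Z := by
          simp only [hc_def, hc1]
        rw [hfy]
        by_cases h0 : po lamP lamM canP canM X Z * c Z = 0
        · split
          · rfl
          · exact h0
        · have hmemZ := hmem Z h0
          rw [if_pos (by rw [hψpos Z hmemZ]; exact Subtype.ext hc1)]
      · rw [if_neg hc1, zero_mul]
        by_cases h0 : po lamP lamM canP canM X Z * c Z = 0
        · split
          · exact h0.symm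
          · rfl
        · have hmemZ := hmem Z h0
          rw [if_neg (by
            rw [hψpos Z hmemZ]
            intro hcon
            exact hc1 (congrArg Subtype.val hcon))]
    rw [tsum_congr hY]
    have hfib := (hsum_h.hasSum.tsum_fiberwise ψ).tsum_eq
    rw [← hfib]
    apply tsum_congr
    intro Y
    refine Eq.trans ?_
      (tsum_subtype (ψ ⁻¹' {Y}) (fun Z : E d => po lamP lamM canP canM X Z * c Z)).symm
    apply tsum_congr
    intro Z
    rw [Set.indicator_apply]
    by_cases hZY : ψ Z = Y
    · rw [if_pos hZY, if_pos (show Z ∈ ψ ⁻¹' {Y} by simp [Set.mem_preimage, hZY])]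
    · rw [if_neg hZY, if_neg (show Z ∉ ψ ⁻¹' {Y} by simp [Set.mem_preimage, hZY])]
  -- step 2 : swap the sums
  have step2 : (∑' Z : E d, po lamP lamM canP canM X Z * c Z)
      = ∑' z : ℕ, ∑' Z : E d,
          (∑ i ∈ Finset.Icc 1 d, term lamP lamM canP canM X z i Z) * c Z := by
    rw [tsum_congr hkey0]
    exact Summable.tsum_comm' hW (fun z => hW.prod_factor z) (fun Z => hW.prod_symm.prod_factor Z)
  -- step 3 : evaluate the inner sum over Z for fixed z
  have step3 : ∀ z : ℕ, (∑' Z : E d,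
        (∑ i ∈ Finset.Icc 1 d, term lamP lamM canP canM X z i Z) * c Z)
      = ∑ i ∈ Finset.Icc 1 d,
          (lamP i X (z + 1) * c (X.1 + (z + 1) • e i, X.2) +
           lamM i X (z + 1) * c (X.1, X.2 + (z + 1) • e i) +
           canP i X (z + 1) * c (X.1 - (z + 1) • e i, X.2) +
           canM i X (z + 1) * c (X.1, X.2 - (z + 1) • e i)) := by
    intro z
    have h1 : ∀ Z : E d,
        (∑ i ∈ Finset.Icc 1 d, term lamP lamM canP canM X z i Z) * c Z =
          ∑ i ∈ Finset.Icc 1 d, term lamP lamM canP canM X z i Z * c Z :=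
      fun Z => Finset.sum_mul _ _ _
    rw [tsum_congr h1, Summable.tsum_finsetSum (fun i _ => term_mul_summable X z i c)]
    apply Finset.sum_congr rfl
    intro i _
    exact tsum_term_mul X z i c
  rw [step1, step2, tsum_congr step3]
  -- step 4 : evaluate the clearing on each event, for fixed z
  apply tsum_congr
  intro z
  have hz1 : 1 ≤ z + 1 := by omega
  have hba : bid X < ask X := hX
  have ha1 : 1 ≤ ask X := one_le_infSupp
  have haD : ask X ≤ d + 1 := infSupp_le_d_succ
  have hbD : bid X ≤ d := supSupp_le_d
  have haS : ask X ≤ Sinv X (z + 1) := ask_le_Sinv hz1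
  have hSD : Sinv X (z + 1) ≤ d + 1 := Sinv_le_succ
  have hBb : Binv X (z + 1) ≤ bid X := Binv_le_bid hz1
  -- the four groups
  have hE1 : (∑ i ∈ Finset.Icc 1 d, lamP i X (z + 1) * c (X.1 + (z + 1) • e i, X.2))
      = (∑ i ∈ Finset.Ico 1 (ask X),
          lamP i X (z + 1) * (f (X.1 + (z + 1) • e i, X.2) - f X)) +
        (∑ i ∈ Finset.Ico (ask X) (Sinv X (z + 1)),
          lamP i X (z + 1) *
            (f (X.1 + ((z + 1) - SX X i) • e i, tauHigh ((i : ℤ) + 1) X.2) - f X)) +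
        (∑ i ∈ Finset.Icc (Sinv X (z + 1)) d,
          lamP i X (z + 1) *
            (f (X.1, tauHigh ((Sinv X (z + 1) : ℤ) + 1) X.2 +
                 (SX X (Sinv X (z + 1)) - (z + 1)) • e (Sinv X (z + 1))) - f X)) := by
    rw [← Finset.Ico_add_one_right_eq_Icc 1 d,
      ← Finset.sum_Ico_consecutive _ (show 1 ≤ Sinv X (z + 1) by omega)
        (show Sinv X (z + 1) ≤ d + 1 from hSD),
      ← Finset.sum_Ico_consecutive _ (show 1 ≤ ask X from ha1)
        (show ask X ≤ Sinv X (z + 1) from haS),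
      Finset.Ico_add_one_right_eq_Icc (Sinv X (z + 1)) d]
    congr 1
    · congr 1
      · apply Finset.sum_congr rfl
        intro i hi
        rw [Finset.mem_Ico] at hi
        simp only [hc_def]
        rw [clear_fix (mem_Lset_addP hX hi.2)]
      · apply Finset.sum_congr rfl
        intro i hi
        rw [Finset.mem_Ico] at hi
        have hi2 : i ≤ d := by omega
        have hS : SX X i < z + 1 := SX_lt_of_lt_Sinv hz1 hi.2 hi2
        simp only [hc_def]
        rw [clear_buy_partial hX hi.1 hi2 hS]
    · apply Finset.sum_congr rfl
      intro i hi
      rw [Finset.mem_Icc] at hi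
      by_cases hlam : lamP i X (z + 1) = 0
      · rw [hlam, zero_mul, zero_mul]
      · obtain ⟨-, hvan, -, -, -⟩ :=
          hIb i (Finset.mem_Icc.2 ⟨by omega, hi.2⟩) X (z + 1) hz1
        have hminS : min (BX X 1) (SX X d) ≤ SX X d := min_le_right _ _
        have hzS : z + 1 < SX X d := by
          by_contra hcon
          push_neg at hcon
          exact hlam (hvan (by omega)).1
        simp only [hc_def]
        rw [clear_buy_full hX hz1 hzS hi.1 hi.2]
  have hE2 : (∑ i ∈ Finset.Icc 1 d, lamM i X (z + 1) * c (X.1, X.2 + (z + 1) • e i))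
      = (∑ i ∈ Finset.Icc 1 (Binv X (z + 1)),
          lamM i X (z + 1) *
            (f (tauLow ((Binv X (z + 1) : ℤ) - 1) X.1 +
                 (BX X (Binv X (z + 1)) - (z + 1)) • e (Binv X (z + 1)), X.2) - f X)) +
        (∑ i ∈ Finset.Icc (Binv X (z + 1) + 1) (bid X),
          lamM i X (z + 1) *
            (f (tauLow ((i : ℤ) - 1) X.1, X.2 + ((z + 1) - BX X i) • e i) - f X)) +
        (∑ i ∈ Finset.Icc (bid X + 1) d,
          lamM i X (z + 1) * (f (X.1, X.2 + (z + 1) • e i) - f X)) := by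
    rw [← Finset.Ico_add_one_right_eq_Icc 1 d,
      ← Finset.sum_Ico_consecutive _ (show 1 ≤ bid X + 1 by omega)
        (show bid X + 1 ≤ d + 1 by omega),
      ← Finset.sum_Ico_consecutive _ (show 1 ≤ Binv X (z + 1) + 1 by omega)
        (show Binv X (z + 1) + 1 ≤ bid X + 1 by omega),
      Finset.Ico_add_one_right_eq_Icc 1 (Binv X (z + 1)),
      Finset.Ico_add_one_right_eq_Icc (bid X + 1) d,
      show Finset.Ico (Binv X (z + 1) + 1) (bid X + 1)
        = Finset.Icc (Binv X (z + 1) + 1) (bid X) from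
        (Finset.Ico_add_one_right_eq_Icc _ _)]
    congr 1
    · congr 1
      · apply Finset.sum_congr rfl
        intro i hi
        rw [Finset.mem_Icc] at hi
        by_cases hlam : lamM i X (z + 1) = 0
        · rw [hlam, zero_mul, zero_mul]
        · obtain ⟨-, hvan, -, -, -⟩ :=
            hIb i (Finset.mem_Icc.2 ⟨hi.1, by omega⟩) X (z + 1) hz1
          have hminB : min (BX X 1) (SX X d) ≤ BX X 1 := min_le_left _ _
          have hzB : z + 1 < BX X 1 := by
            by_contra hcon
            push_neg at hcon
            exact hlam (hvan (by omega)).2.1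
          simp only [hc_def]
          rw [clear_sell_full hX hz1 hzB hi.1 hi.2]
      · apply Finset.sum_congr rfl
        intro i hi
        rw [Finset.mem_Icc] at hi
        have hB : BX X i < z + 1 := BX_lt_of_Binv_lt hz1 (by omega)
        simp only [hc_def]
        rw [clear_sell_partial hX (by omega) hi.2 hB]
    · apply Finset.sum_congr rfl
      intro i hi
      rw [Finset.mem_Icc] at hi
      simp only [hc_def]
      rw [clear_fix (mem_Lset_addM hX (by omega) hi.2)]
  have hE3 : (∑ i ∈ Finset.Icc 1 d, canP i X (z + 1) * c (X.1 - (z + 1) • e i, X.2))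
      = ∑ i ∈ Finset.Icc 1 (bid X),
          canP i X (z + 1) * (f (X.1 - (z + 1) • e i, X.2) - f X) := by
    rw [← Finset.Ico_add_one_right_eq_Icc 1 d,
      ← Finset.sum_Ico_consecutive _ (show 1 ≤ bid X + 1 by omega)
        (show bid X + 1 ≤ d + 1 by omega),
      Finset.Ico_add_one_right_eq_Icc 1 (bid X)]
    have hzero : (∑ i ∈ Finset.Ico (bid X + 1) (d + 1),
        canP i X (z + 1) * c (X.1 - (z + 1) • e i, X.2)) = 0 := by
      apply Finset.sum_eq_zero
      intro i hi
      rw [Finset.mem_Ico] at hi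
      obtain ⟨-, -, -, hcanP, -⟩ :=
        hIb i (Finset.mem_Icc.2 ⟨by omega, by omega⟩) X (z + 1) hz1
      rw [hcanP (by rw [ent_zero_of_gt_bid (by omega)]; omega), zero_mul]
    rw [hzero, add_zero]
    apply Finset.sum_congr rfl
    intro i hi
    simp only [hc_def]
    rw [clear_fix (mem_Lset_subP (v := X.1 - (z + 1) • e i) hX (fun j => Nat.sub_le _ _))]
  have hE4 : (∑ i ∈ Finset.Icc 1 d, canM i X (z + 1) * c (X.1, X.2 - (z + 1) • e i))
      = ∑ i ∈ Finset.Icc (ask X) d,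
          canM i X (z + 1) * (f (X.1, X.2 - (z + 1) • e i) - f X) := by
    rw [← Finset.Ico_add_one_right_eq_Icc 1 d,
      ← Finset.sum_Ico_consecutive _ (show 1 ≤ ask X from ha1)
        (show ask X ≤ d + 1 from haD),
      Finset.Ico_add_one_right_eq_Icc (ask X) d]
    have hzero : (∑ i ∈ Finset.Ico 1 (ask X),
        canM i X (z + 1) * c (X.1, X.2 - (z + 1) • e i)) = 0 := by
      apply Finset.sum_eq_zero
      intro i hi
      rw [Finset.mem_Ico] at hi
      obtain ⟨-, -, -, -, hcanM⟩ :=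
        hIb i (Finset.mem_Icc.2 ⟨hi.1, by omega⟩) X (z + 1) hz1
      rw [hcanM (by rw [ent_zero_of_lt_ask (by omega)]; omega), zero_mul]
    rw [hzero, zero_add]
    apply Finset.sum_congr rfl
    intro i hi
    simp only [hc_def]
    rw [clear_fix (mem_Lset_subM (v := X.2 - (z + 1) • e i) hX (fun j => Nat.sub_le _ _))]
  calc (∑ i ∈ Finset.Icc 1 d,
        (lamP i X (z + 1) * c (X.1 + (z + 1) • e i, X.2) +
         lamM i X (z + 1) * c (X.1, X.2 + (z + 1) • e i) +
         canP i X (z + 1) * c (X.1 - (z + 1) • e i, X.2) +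
         canM i X (z + 1) * c (X.1, X.2 - (z + 1) • e i)))
      = (∑ i ∈ Finset.Icc 1 d, lamP i X (z + 1) * c (X.1 + (z + 1) • e i, X.2)) +
        (∑ i ∈ Finset.Icc 1 d, lamM i X (z + 1) * c (X.1, X.2 + (z + 1) • e i)) +
        (∑ i ∈ Finset.Icc 1 d, canP i X (z + 1) * c (X.1 - (z + 1) • e i, X.2)) +
        (∑ i ∈ Finset.Icc 1 d, canM i X (z + 1) * c (X.1, X.2 - (z + 1) • e i)) := by
        rw [Finset.sum_add_distrib, Finset.sum_add_distrib, Finset.sum_add_distrib]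
    _ = _ := by
        rw [hE1, hE2, hE3, hE4]
        ring

end OB
end

section
/- Stability of the centering operator: for every (Y,p) ∈ L⁰ × ℤ, J(Y,p) ∈ L^m; in particular, writing J(Y,p) = (X,p'), both X⁺ ≠ 0 and X⁻ ≠ 0. -/
open scoped BigOperators

namespace COB

/-- Vectors of queue sizes indexed by prices in `I = {−d',…,d'}` (functions `ℤ → ℕ`
vanishing outside `I`; the support condition is part of membership in `Em`). -/
abbrev VecC := ℤ → ℕ

/-- Pairs (buy side, sell side). -/
abbrev EC := VecC × VecC

/-- A vector is supported in `{−d',…,d'}`. -/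
def suppIn (d' : ℕ) (Z : VecC) : Prop :=
  ∀ j : ℤ, Z j ≠ 0 → -(d' : ℤ) ≤ j ∧ j ≤ (d' : ℤ)

/-- Price support of a vector, inside `I = {−d',…,d'}`. -/
noncomputable def suppC (d' : ℕ) (Z : VecC) : Finset ℤ :=
  (Finset.Icc (-(d' : ℤ)) (d' : ℤ)).filter fun j => 0 < Z j

/-- `sup` of a finite set of prices, with the convention `sup ∅ = −d'`. -/
def supD (d' : ℕ) (S : Finset ℤ) : ℤ := if h : S.Nonempty then S.max' h else -(d' : ℤ)

/-- `inf` of a finite set of prices, with the convention `inf ∅ = d'`. -/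
def infD (d' : ℕ) (S : Finset ℤ) : ℤ := if h : S.Nonempty then S.min' h else (d' : ℤ)

/-- bid price `b(X) = sup supp(X⁺)` (convention `sup supp(0) = −d'`). -/
noncomputable def bC (d' : ℕ) (X : EC) : ℤ := supD d' (suppC d' X.1)

/-- ask price `a(X) = inf supp(X⁻)` (convention `inf supp(0) = d'`). -/
noncomputable def aC (d' : ℕ) (X : EC) : ℤ := infD d' (suppC d' X.2)

/-- `E^m`: configurations supported in `I` with nonempty buy and sell sides. -/
def Em (d' : ℕ) : Set EC :=
  {X | suppIn d' X.1 ∧ suppIn d' X.2 ∧ X.1 ≠ 0 ∧ X.2 ≠ 0}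

/-- `L⁰`: elements of `E^m` with `a(X) > b(X)`. -/
def L0 (d' : ℕ) : Set EC := {X | X ∈ Em d' ∧ bC d' X < aC d' X}

/-- `p̂`: the parity of `p` (`0` if `p` is even, `1` if `p` is odd). -/
def hatp (p : ℤ) : ℤ := p % 2

/-- `⌈p/2⌉` for an integer `p`. -/
def ceilHalf (p : ℤ) : ℤ := Int.fdiv (p + 1) 2

/-- `[p,p'] = ⌈p'/2⌉ − ⌈p/2⌉`. -/
def shift (p p' : ℤ) : ℤ := ceilHalf p' - ceilHalf p

/-- The centred state space `L^m`. -/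
def Lm (d' : ℕ) : Set (EC × ℤ) :=
  {Xp | Xp.1 ∈ Em d' ∧ bC d' Xp.1 < aC d' Xp.1 ∧
    aC d' Xp.1 + bC d' Xp.1 + hatp Xp.2 = 0}

/-- The truncating shift `σ_i` on a single vector. -/
def sigmaV (d' : ℕ) (i : ℤ) (Y : VecC) : VecC := fun j =>
  if min (d' : ℤ) ((d' : ℤ) - i) < j ∨ j < max (-(d' : ℤ)) (-(d' : ℤ) - i) then 0
  else Y (j + i)

/-- The truncating shift `σ_i` acting componentwise on pairs. -/
def sigmaP (d' : ℕ) (i : ℤ) (Y : EC) : EC := (sigmaV d' i Y.1, sigmaV d' i Y.2)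

/-- The centering operator `J(Y,p) = (σ_{[p,p']}(Y), p')`, `p' = p + a(Y) + b(Y) + p̂`. -/
noncomputable def J (d' : ℕ) (Y : EC) (p : ℤ) : EC × ℤ :=
  (sigmaP d' (shift p (p + aC d' Y + bC d' Y + hatp p)) Y,
    p + aC d' Y + bC d' Y + hatp p)

/-! The book `Y` has best bid `b < a` (best ask); `J` shifts it by `i = ⌈(a+b)/2⌉`, the midpoint
rounded up, and `p + p̂` is even so that `p'` has the parity of `a + b`. The shifted book has
best quotes `b - i < a - i`, which straddle `0` and still lie in `I`, with
`(a - i) + (b - i) = -(a+b mod 2) = -p̂'`. -/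

section Arithmetic

lemma ceilHalf_eq (p : ℤ) : ceilHalf p = (p + 1) / 2 :=
  Int.fdiv_eq_ediv_of_nonneg _ (by norm_num)

lemma shift_self_add_hatp (p s : ℤ) : shift p (p + s + hatp p) = ceilHalf s := by
  simp only [shift, ceilHalf_eq, hatp]
  omega

lemma hatp_self_add_hatp (p s : ℤ) : hatp (p + s + hatp p) = hatp s := by
  simp only [hatp]
  omega

end Arithmetic

section Support

variable {d' : ℕ} {Z : VecC}

lemma mem_suppC (hZ : suppIn d' Z) {j : ℤ} : j ∈ suppC d' Z ↔ Z j ≠ 0 := by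
  simp only [suppC, Finset.mem_filter, Finset.mem_Icc]
  exact ⟨fun h => (Nat.pos_iff_ne_zero.mp h.2), fun h => ⟨hZ j h, Nat.pos_of_ne_zero h⟩⟩

lemma suppC_nonempty (hZ : suppIn d' Z) (h : Z ≠ 0) : (suppC d' Z).Nonempty := by
  obtain ⟨j, hj⟩ := Function.ne_iff.mp h
  exact ⟨j, (mem_suppC hZ).mpr hj⟩

lemma ne_zero_of_mem_suppC {j : ℤ} (hj : j ∈ suppC d' Z) : Z ≠ 0 := by
  rintro rfl
  simp [suppC] at hj

lemma supD_eq_of_isGreatest {S : Finset ℤ} {m : ℤ} (h : IsGreatest (S : Set ℤ) m) :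
    supD d' S = m := by
  rw [supD, dif_pos ⟨m, h.1⟩]
  exact (S.isGreatest_max' _).unique h

lemma infD_eq_of_isLeast {S : Finset ℤ} {m : ℤ} (h : IsLeast (S : Set ℤ) m) :
    infD d' S = m := by
  rw [infD, dif_pos ⟨m, h.1⟩]
  exact (S.isLeast_min' _).unique h

lemma isGreatest_supD_suppC (hZ : suppIn d' Z) (h : Z ≠ 0) :
    IsGreatest (suppC d' Z : Set ℤ) (supD d' (suppC d' Z)) := by
  rw [supD, dif_pos (suppC_nonempty hZ h)]
  exact Finset.isGreatest_max' _ _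

lemma isLeast_infD_suppC (hZ : suppIn d' Z) (h : Z ≠ 0) :
    IsLeast (suppC d' Z : Set ℤ) (infD d' (suppC d' Z)) := by
  rw [infD, dif_pos (suppC_nonempty hZ h)]
  exact Finset.isLeast_min' _ _

lemma mem_Icc_of_mem_suppC {j : ℤ} (hj : j ∈ suppC d' Z) : -(d' : ℤ) ≤ j ∧ j ≤ d' :=
  Finset.mem_Icc.mp (Finset.mem_filter.mp hj).1

end Support

section Shift

variable {d' : ℕ} {i : ℤ} {Z : VecC}

lemma suppIn_sigmaV : suppIn d' (sigmaV d' i Z) := by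
  intro j hj
  simp only [sigmaV] at hj
  split_ifs at hj with h
  · exact absurd rfl hj
  · omega

lemma mem_suppC_sigmaV (hZ : suppIn d' Z) {j : ℤ} :
    j ∈ suppC d' (sigmaV d' i Z) ↔ j + i ∈ suppC d' Z ∧ -(d' : ℤ) ≤ j ∧ j ≤ d' := by
  rw [mem_suppC suppIn_sigmaV, mem_suppC hZ]
  simp only [sigmaV]
  split_ifs with h
  · have := hZ (j + i)
    omega
  · omega

lemma isGreatest_suppC_sigmaV (hZ : suppIn d' Z) {b : ℤ}
    (hb : IsGreatest (suppC d' Z : Set ℤ) b) (hlo : -(d' : ℤ) ≤ b - i) (hhi : b - i ≤ d') :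
    IsGreatest (suppC d' (sigmaV d' i Z) : Set ℤ) (b - i) := by
  refine ⟨(mem_suppC_sigmaV hZ).mpr ⟨by simpa using hb.1, hlo, hhi⟩, fun j hj => ?_⟩
  have := hb.2 ((mem_suppC_sigmaV hZ).mp hj).1
  omega

lemma isLeast_suppC_sigmaV (hZ : suppIn d' Z) {a : ℤ}
    (ha : IsLeast (suppC d' Z : Set ℤ) a) (hlo : -(d' : ℤ) ≤ a - i) (hhi : a - i ≤ d') :
    IsLeast (suppC d' (sigmaV d' i Z) : Set ℤ) (a - i) := by
  refine ⟨(mem_suppC_sigmaV hZ).mpr ⟨by simpa using ha.1, hlo, hhi⟩, fun j hj => ?_⟩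
  have := ha.2 ((mem_suppC_sigmaV hZ).mp hj).1
  omega

end Shift

theorem J_maps_into_Lm_general (d' : ℕ) :
    ∀ Y ∈ L0 d', ∀ p : ℤ,
      J d' Y p ∈ Lm d' ∧ (J d' Y p).1.1 ≠ 0 ∧ (J d' Y p).1.2 ≠ 0 := by
  rintro Y ⟨⟨hY₁, hY₂, hY₁0, hY₂0⟩, hba⟩ p
  set a := aC d' Y
  set b := bC d' Y
  set i := ceilHalf (a + b)
  have hb : IsGreatest (suppC d' Y.1 : Set ℤ) b := isGreatest_supD_suppC hY₁ hY₁0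
  have ha : IsLeast (suppC d' Y.2 : Set ℤ) a := isLeast_infD_suppC hY₂ hY₂0
  have hbI := mem_Icc_of_mem_suppC hb.1
  have haI := mem_Icc_of_mem_suppC ha.1
  have hi : i = (a + b + 1) / 2 := ceilHalf_eq _
  have hX₁ := isGreatest_suppC_sigmaV (i := i) hY₁ hb (by omega) (by omega)
  have hX₂ := isLeast_suppC_sigmaV (i := i) hY₂ ha (by omega) (by omega)
  have hJ : J d' Y p = (sigmaP d' i Y, p + (a + b) + hatp p) := by
    rw [J, add_assoc p a b, shift_self_add_hatp]
  have hX₁0 := ne_zero_of_mem_suppC hX₁.1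
  have hX₂0 := ne_zero_of_mem_suppC hX₂.1
  rw [hJ]
  refine ⟨⟨⟨suppIn_sigmaV, suppIn_sigmaV, hX₁0, hX₂0⟩, ?_, ?_⟩, hX₁0, hX₂0⟩ <;>
    simp only [aC, bC, sigmaP, supD_eq_of_isGreatest hX₁, infD_eq_of_isLeast hX₂,
      hatp_self_add_hatp]
  · exact sub_lt_sub_right hba i
  · simp only [hatp]
    omega

/-- Lemma D.1 of Cont–Degond–Xuan: the centering operator maps
`L⁰ × ℤ` into `L^m`; in particular both sides of the shifted book are nonempty. -/
theorem J_maps_into_Lm (d' : ℕ) (hd' : 1 ≤ d') :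
    ∀ Y ∈ L0 d', ∀ p : ℤ,
      J d' Y p ∈ Lm d' ∧ (J d' Y p).1.1 ≠ 0 ∧ (J d' Y p).1.2 ≠ 0 :=
  J_maps_into_Lm_general d'

end COB
end
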